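/- arXiv:2307.12921 — 5 statements merged into one kernel-verified Lean document; each statement's English description precedes it below -/
import Mathlib

section
/- For nonzero complex numbers x, y, u, v and p with |p| < 1, the modified Jacobi theta function satisfies the three-term addition formula θ(xy)θ(x/y)θ(uv)θ(u/v) − θ(xv)θ(x/v)θ(uy)θ(u/y) = (u/y) · θ(yv)θ(y/v)θ(xu)θ(x/u), where all theta functions are taken with nome p. -/
/-- The infinite `p`-shifted factorial `(x; p)_∞ = ∏_{k=0}^∞ (1 - x p^k)`. -/
noncomputable def pinf (x p : ℂ) : ℂ := ∏' k : ℕ, (1 - x * p ^ k)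

/-- The modified Jacobi theta function `θ(x; p) := (x; p)_∞ (p/x; p)_∞`. -/
noncomputable def theta (x p : ℂ) : ℂ := pinf x p * pinf (p / x) p

open Finset Filter Topology

namespace ThetaAux

/-- `T n = n(n-1)/2`. -/
def T (n : ℤ) : ℤ := n * (n - 1) / 2

lemma two_T (n : ℤ) : 2 * T n = n * (n - 1) := by
  have h : (2:ℤ) ∣ n * (n - 1) := by
    have h2 : Even ((n-1) * (n - 1 + 1)) := Int.even_mul_succ_self (n-1)
    have h3 : n * (n - 1) = (n-1) * (n - 1 + 1) := by ring
    rw [h3]; exact h2.two_dvd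
  exact Int.mul_ediv_cancel' h

lemma T_add_T (j k : ℤ) : T (j + k) + T (j - k) = j * j - j + k * k := by
  have h : 2 * (T (j+k) + T (j-k)) = 2 * (j * j - j + k * k) := by
    have h1 := two_T (j + k); have h2 := two_T (j - k)
    calc 2 * (T (j+k) + T (j-k)) = 2 * T (j+k) + 2 * T (j-k) := by ring
    _ = (j+k) * ((j+k) - 1) + (j-k) * ((j-k) - 1) := by rw [h1, h2]
    _ = 2 * (j * j - j + k * k) := by ring
  omega

lemma T_add_T' (j k : ℤ) : T (j + k + 1) + T (j - k) = j * j + (k * k + k) := by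
  have h : 2 * (T (j+k+1) + T (j-k)) = 2 * (j * j + (k * k + k)) := by
    have h1 := two_T (j + k + 1); have h2 := two_T (j - k)
    calc 2 * (T (j+k+1) + T (j-k)) = 2 * T (j+k+1) + 2 * T (j-k) := by ring
    _ = (j+k+1) * ((j+k+1) - 1) + (j-k) * ((j-k) - 1) := by rw [h1, h2]
    _ = 2 * (j * j + (k * k + k)) := by ring
  omega

lemma T_succ (n : ℤ) : T (n + 1) = T n + n := by
  have h1 := two_T (n + 1); have h2 := two_T n
  have : 2 * T (n+1) = 2 * (T n + n) := by
    calc 2 * T (n+1) = (n+1) * ((n+1)-1) := h1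
    _ = n * (n-1) + 2 * n := by ring
    _ = 2 * T n + 2 * n := by rw [h2]
    _ = 2 * (T n + n) := by ring
  omega

lemma T_sub (j N : ℤ) : T (j - N) = T j - N * j + N * (N + 1) / 2 := by
  have hc : 2 * (N * (N + 1) / 2) = N * (N + 1) := by
    exact Int.mul_ediv_cancel' (Int.even_mul_succ_self N).two_dvd
  have h1 := two_T (j - N); have h2 := two_T j
  have : 2 * T (j - N) = 2 * (T j - N * j + N * (N+1) / 2) := by
    calc 2 * T (j - N) = (j - N) * ((j - N) - 1) := h1
    _ = j * (j - 1) - 2 * (N * j) + N * (N + 1) := by ring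
    _ = 2 * T j - 2 * (N * j) + 2 * (N * (N+1)/2) := by rw [h2, hc]
    _ = 2 * (T j - N * j + N * (N+1) / 2) := by ring
  omega

/-! ### Summability helpers -/

/-- Master summability lemma over ℤ with quadratic exponent. -/
lemma summable_master {r s : ℝ} (hr0 : 0 < r) (hr : r < 1) (hs : 0 < s) (b : ℤ) :
    Summable (fun n : ℤ => r ^ (n * n + b * n) * s ^ n) := by
  have hrne : (r:ℝ) ≠ 0 := ne_of_gt hr0
  have hsne : (s:ℝ) ≠ 0 := ne_of_gt hs
  have hpos : ∀ n : ℤ, 0 < r ^ (n * n + b * n) * s ^ n := fun n =>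
    mul_pos (zpow_pos hr0 _) (zpow_pos hs _)
  -- helper : eventual smallness
  have key : ∀ (t : ℝ), 0 < t → ∀ᶠ m : ℤ in atTop, r ^ m * t ≤ 1/2 := by
    intro t ht
    have h0 : Tendsto (fun K : ℕ => r ^ K * t) atTop (𝓝 (0 * t)) :=
      (tendsto_pow_atTop_nhds_zero_of_lt_one hr0.le hr).mul_const t
    rw [zero_mul] at h0
    obtain ⟨K, hK⟩ := (h0.eventually (eventually_le_nhds (by norm_num : (0:ℝ) < 1/2))).exists
    filter_upwards [eventually_ge_atTop (K : ℤ)] with m hm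
    calc r ^ m * t ≤ r ^ (K:ℤ) * t := by
          apply mul_le_mul_of_nonneg_right _ ht.le
          exact zpow_le_zpow_right_of_le_one₀ hr0 hr.le hm
    _ = r ^ K * t := by rw [zpow_natCast]
    _ ≤ 1/2 := hK
  apply Summable.of_nat_of_neg
  · -- positive side
    apply summable_of_ratio_norm_eventually_le (r := 1/2) (by norm_num)
    have : ∀ᶠ n : ℕ in atTop, r ^ (2 * (n:ℤ) + 1 + b) * s ≤ 1/2 := by
      have := key s hs
      rw [eventually_atTop] at this ⊢
      obtain ⟨M, hM⟩ := this
      exact ⟨(M.natAbs + b.natAbs + 1), fun n hn => hM _ (by omega)⟩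
    filter_upwards [this] with n hn
    have hexp : ((n:ℤ)+1) * ((n:ℤ)+1) + b * ((n:ℤ)+1) =
        (((n:ℤ)) * n + b * n) + (2 * (n:ℤ) + 1 + b) := by ring
    rw [Real.norm_eq_abs, Real.norm_eq_abs, abs_of_pos (hpos _), abs_of_pos (hpos _)]
    push_cast
    rw [hexp, zpow_add₀ hrne, zpow_add₀ hsne]
    calc r ^ ((n:ℤ) * n + b * n) * r ^ (2*(n:ℤ)+1+b) * (s ^ (n:ℤ) * s ^ (1:ℤ)) =
        (r ^ (2*(n:ℤ)+1+b) * s ^ (1:ℤ)) * (r ^ ((n:ℤ)*n + b*n) * s ^ (n:ℤ)) := by ring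
    _ ≤ (1/2) * (r ^ ((n:ℤ)*n + b*n) * s ^ (n:ℤ)) := by
        apply mul_le_mul_of_nonneg_right _ (hpos _).le
        simpa using hn
  · -- negative side
    apply summable_of_ratio_norm_eventually_le (r := 1/2) (by norm_num)
    have : ∀ᶠ n : ℕ in atTop, r ^ (2 * (n:ℤ) + 1 - b) * s⁻¹ ≤ 1/2 := by
      have := key s⁻¹ (inv_pos.mpr hs)
      rw [eventually_atTop] at this ⊢
      obtain ⟨M, hM⟩ := this
      exact ⟨(M.natAbs + b.natAbs + 1), fun n hn => hM _ (by omega)⟩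
    filter_upwards [this] with n hn
    have hexp : (-((n:ℤ)+1)) * (-((n:ℤ)+1)) + b * (-((n:ℤ)+1)) =
        ((-(n:ℤ)) * (-(n:ℤ)) + b * (-(n:ℤ))) + (2 * (n:ℤ) + 1 - b) := by ring
    rw [Real.norm_eq_abs, Real.norm_eq_abs, abs_of_pos (hpos _), abs_of_pos (hpos _)]
    push_cast
    rw [hexp, zpow_add₀ hrne, show (-((n:ℤ)+1)) = (-(n:ℤ)) + (-1) by ring,
      zpow_add₀ hsne]
    calc r ^ ((-(n:ℤ)) * (-(n:ℤ)) + b * (-(n:ℤ))) * r ^ (2*(n:ℤ)+1-b) *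
          (s ^ (-(n:ℤ)) * s ^ (-1:ℤ)) =
        (r ^ (2*(n:ℤ)+1-b) * s ^ (-1:ℤ)) * (r ^ ((-(n:ℤ))*(-(n:ℤ)) + b*(-(n:ℤ))) * s ^ (-(n:ℤ))) := by
          ring
    _ ≤ (1/2) * (r ^ ((-(n:ℤ))*(-(n:ℤ)) + b*(-(n:ℤ))) * s ^ (-(n:ℤ))) := by
        apply mul_le_mul_of_nonneg_right _ (hpos _).le
        simpa [zpow_neg_one] using hn


/-! ### The series -/

noncomputable def termS (q x : ℂ) (n : ℤ) : ℂ := (-1) ^ n * q ^ (T n) * x ^ n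
noncomputable def SS (q x : ℂ) : ℂ := ∑' n : ℤ, termS q x n
noncomputable def termA (q a : ℂ) (n : ℤ) : ℂ := q ^ (n * n - n) * a ^ (2 * n)
noncomputable def termB (q a : ℂ) (n : ℤ) : ℂ := q ^ (n * n) * a ^ (2 * n)
noncomputable def AA (q a : ℂ) : ℂ := ∑' n : ℤ, termA q a n
noncomputable def BB (q a : ℂ) : ℂ := ∑' n : ℤ, termB q a n

variable {q : ℂ}

lemma norm_termS (x : ℂ) (n : ℤ) : ‖termS q x n‖ = ‖q‖ ^ (T n) * ‖x‖ ^ n := by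
  rw [termS, norm_mul, norm_mul, norm_zpow, norm_zpow, norm_zpow]
  simp [norm_neg]

lemma summable_norm_termS (hq0 : q ≠ 0) (hq : ‖q‖ < 1) {x : ℂ} (hx : x ≠ 0) :
    Summable (fun n : ℤ => ‖termS q x n‖) := by
  have hqpos : (0:ℝ) < ‖q‖ := norm_pos_iff.mpr hq0
  set r := Real.sqrt ‖q‖ with hr
  have hr0 : 0 < r := Real.sqrt_pos.mpr hqpos
  have hr1 : r < 1 := by
    rw [hr, show (1:ℝ) = Real.sqrt 1 by simp]
    exact Real.sqrt_lt_sqrt (norm_nonneg q) hq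
  have hrsq : r ^ (2:ℤ) = ‖q‖ := by
    rw [show ((2:ℤ)) = ((2:ℕ):ℤ) by norm_num, zpow_natCast]
    exact Real.sq_sqrt hqpos.le
  have key : ∀ n : ℤ, ‖termS q x n‖ = r ^ (n * n + (-1) * n) * ‖x‖ ^ n := by
    intro n
    rw [norm_termS]
    congr 1
    rw [← hrsq, ← zpow_mul]
    congr 1
    have h := two_T n
    have : n * n + -1 * n = n * (n - 1) := by ring
    omega
  rw [funext key]
  exact summable_master hr0 hr1 (norm_pos_iff.mpr hx) (-1)

lemma norm_termA (a : ℂ) (n : ℤ) : ‖termA q a n‖ = ‖q‖ ^ (n * n - n) * (‖a‖ ^ (2:ℤ)) ^ n := by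
  rw [termA, norm_mul, norm_zpow, norm_zpow, ← zpow_mul]

lemma norm_termB (a : ℂ) (n : ℤ) : ‖termB q a n‖ = ‖q‖ ^ (n * n) * (‖a‖ ^ (2:ℤ)) ^ n := by
  rw [termB, norm_mul, norm_zpow, norm_zpow, ← zpow_mul]

lemma summable_norm_termA (hq0 : q ≠ 0) (hq : ‖q‖ < 1) {a : ℂ} (ha : a ≠ 0) :
    Summable (fun n : ℤ => ‖termA q a n‖) := by
  have hqpos : (0:ℝ) < ‖q‖ := norm_pos_iff.mpr hq0
  have h2 : (0:ℝ) < ‖a‖ ^ (2:ℤ) := zpow_pos (norm_pos_iff.mpr ha) _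
  have key : ∀ n : ℤ, ‖termA q a n‖ = ‖q‖ ^ (n * n + (-1) * n) * (‖a‖ ^ (2:ℤ)) ^ n := by
    intro n; rw [norm_termA]; congr 2; ring
  rw [funext key]
  exact summable_master hqpos hq h2 (-1)

lemma summable_norm_termB (hq0 : q ≠ 0) (hq : ‖q‖ < 1) {a : ℂ} (ha : a ≠ 0) :
    Summable (fun n : ℤ => ‖termB q a n‖) := by
  have hqpos : (0:ℝ) < ‖q‖ := norm_pos_iff.mpr hq0
  have h2 : (0:ℝ) < ‖a‖ ^ (2:ℤ) := zpow_pos (norm_pos_iff.mpr ha) _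
  have key : ∀ n : ℤ, ‖termB q a n‖ = ‖q‖ ^ (n * n + 0 * n) * (‖a‖ ^ (2:ℤ)) ^ n := by
    intro n; rw [norm_termB]; congr 2; ring
  rw [funext key]
  exact summable_master hqpos hq h2 0


/-! ### Infinite products -/

lemma exists_small (hq : ‖q‖ < 1) (x : ℂ) : ∃ K : ℕ, ∀ k : ℕ, ‖x * q ^ (k + K)‖ ≤ 1/2 := by
  have h0 : Tendsto (fun K : ℕ => ‖x‖ * ‖q‖ ^ K) atTop (𝓝 (‖x‖ * 0)) :=
    (tendsto_pow_atTop_nhds_zero_of_lt_one (norm_nonneg q) hq).const_mul ‖x‖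
  rw [mul_zero] at h0
  obtain ⟨K, hK⟩ := (h0.eventually (eventually_le_nhds (by norm_num : (0:ℝ) < 1/2))).exists
  refine ⟨K, fun k => ?_⟩
  rw [norm_mul, norm_pow]
  calc ‖x‖ * ‖q‖ ^ (k + K) ≤ ‖x‖ * ‖q‖ ^ K := by
        apply mul_le_mul_of_nonneg_left _ (norm_nonneg x)
        exact pow_le_pow_of_le_one (norm_nonneg q) hq.le (Nat.le_add_left K k)
  _ ≤ 1/2 := hK

lemma summable_log_tail (hq : ‖q‖ < 1) (x : ℂ) {K : ℕ}
    (hK : ∀ k : ℕ, ‖x * q ^ (k + K)‖ ≤ 1/2) :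
    Summable fun n : ℕ => Complex.log (1 - x * q ^ (n + K)) := by
  apply Summable.of_norm_bounded (g := fun n => (3/2) * (‖x * q ^ K‖ * ‖q‖ ^ n))
  · exact (((summable_geometric_of_lt_one (norm_nonneg q) hq).mul_left _).mul_left _)
  · intro n
    have hb : ‖-(x * q ^ (n + K))‖ ≤ 1/2 := by rw [norm_neg]; exact hK n
    have := Complex.norm_log_one_add_half_le_self hb
    rw [show (1:ℂ) + -(x * q ^ (n+K)) = 1 - x * q ^ (n+K) by ring] at this
    refine this.trans ?_
    rw [norm_neg, norm_mul, norm_mul, norm_pow, norm_pow, pow_add]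
    apply le_of_eq; ring

lemma factor_ne_zero {w : ℂ} (h : ‖w‖ < 1) : 1 - w ≠ 0 := by
  intro h0
  have : w = 1 := by linear_combination -h0
  rw [this] at h; simp at h

lemma multipliable_of_tail {f : ℕ → ℂ} (K : ℕ) (h : Multipliable fun n => f (n + K)) :
    Multipliable f := by
  have hs : Multipliable (f ∘ (↑) : (↑(Finset.range K) : Set ℕ) → ℂ) :=
    (Finset.range K).finite_toSet.multipliable _
  have hsc : Multipliable (f ∘ (↑) : (((Finset.range K : Set ℕ))ᶜ : Set ℕ) → ℂ) := by
    have heq : Multipliable ((f ∘ (↑) : { n // n ∉ Finset.range K } → ℂ) ∘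
        (notMemRangeEquiv K).symm) := by
      have h3 : ((f ∘ (↑) : { n // n ∉ Finset.range K } → ℂ) ∘
          (notMemRangeEquiv K).symm) = fun n => f (n + K) := by
        funext n
        simp [coe_notMemRangeEquiv_symm, Function.comp]
      rwa [h3]
    have h2 : Multipliable (f ∘ (↑) : { n // n ∉ Finset.range K } → ℂ) :=
      ((notMemRangeEquiv K).symm.multipliable_iff).mp heq
    exact h2
  exact hs.mul_compl hsc

lemma multipliable_factor (hq : ‖q‖ < 1) (x : ℂ) :
    Multipliable (fun k : ℕ => 1 - x * q ^ k) := by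
  obtain ⟨K, hK⟩ := exists_small hq x
  apply multipliable_of_tail K
  have hfn : ∀ (_ : Unit) (n : ℕ), 1 - x * q ^ (n + K) ≠ 0 := fun _ n =>
    factor_ne_zero (lt_of_le_of_lt (hK n) (by norm_num))
  exact Complex.multipliable_of_summable_log (summable_log_tail hq x hK)

lemma tendsto_prod_pinf (hq : ‖q‖ < 1) (x : ℂ) :
    Tendsto (fun N => ∏ k ∈ range N, (1 - x * q ^ k)) atTop (𝓝 (pinf x q)) :=
  (multipliable_factor hq x).hasProd.tendsto_prod_nat

lemma pinf_ne_zero_of_ne (hq : ‖q‖ < 1) {x : ℂ} (hfn : ∀ k : ℕ, 1 - x * q ^ k ≠ 0) :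
    pinf x q ≠ 0 := by
  obtain ⟨K, hK⟩ := exists_small hq x
  have hsum : Summable fun k : ℕ => Complex.log (1 - x * q ^ k) := by
    rw [← summable_nat_add_iff K]
    exact summable_log_tail hq x hK
  have h2 := Complex.cexp_tsum_eq_tprod (f := fun k : ℕ => 1 - x * q ^ k) hfn hsum
  rw [pinf, ← h2]
  exact Complex.exp_ne_zero _

lemma P_ne_zero (hq : ‖q‖ < 1) : pinf q q ≠ 0 := by
  apply pinf_ne_zero_of_ne hq
  intro k
  apply factor_ne_zero
  rw [norm_mul, norm_pow]
  calc ‖q‖ * ‖q‖ ^ k ≤ ‖q‖ * 1 := by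
        apply mul_le_mul_of_nonneg_left _ (norm_nonneg q)
        exact pow_le_one₀ (norm_nonneg q) hq.le
  _ < 1 := by rw [mul_one]; exact hq

/-! ### Finite q-Pochhammer -/

noncomputable def QP (q : ℂ) (N : ℕ) : ℂ := ∏ i ∈ range N, (1 - q ^ (i + 1))

lemma QP_factor_ne_zero (hq : ‖q‖ < 1) (i : ℕ) : 1 - q ^ (i + 1) ≠ 0 := by
  apply factor_ne_zero
  rw [norm_pow]
  calc ‖q‖ ^ (i+1) ≤ ‖q‖ ^ 1 := pow_le_pow_of_le_one (norm_nonneg q) hq.le (by omega)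
  _ < 1 := by rwa [pow_one]

lemma QP_ne_zero (hq : ‖q‖ < 1) (N : ℕ) : QP q N ≠ 0 :=
  Finset.prod_ne_zero_iff.mpr fun i _ => QP_factor_ne_zero hq i

lemma QP_succ (q : ℂ) (N : ℕ) : QP q (N + 1) = QP q N * (1 - q ^ (N + 1)) :=
  Finset.prod_range_succ _ _

lemma tendsto_QP (hq : ‖q‖ < 1) : Tendsto (QP q) atTop (𝓝 (pinf q q)) := by
  have := tendsto_prod_pinf hq q
  convert this using 2 with N
  apply Finset.prod_congr rfl
  intro i _
  rw [pow_succ']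

lemma sum_pow_le (hq : ‖q‖ < 1) (N : ℕ) :
    ∑ i ∈ range N, ‖q‖ ^ (i + 1) ≤ ‖q‖ * (1 - ‖q‖)⁻¹ := by
  have hsum : Summable fun i : ℕ => ‖q‖ ^ (i + 1) := by
    simp_rw [pow_succ']
    exact (summable_geometric_of_lt_one (norm_nonneg q) hq).mul_left _
  calc ∑ i ∈ range N, ‖q‖ ^ (i+1) ≤ ∑' i : ℕ, ‖q‖ ^ (i+1) :=
        Summable.sum_le_tsum _ (fun i _ => pow_nonneg (norm_nonneg q) _) hsum
  _ = ‖q‖ * (1 - ‖q‖)⁻¹ := by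
      simp_rw [pow_succ']
      rw [tsum_mul_left, tsum_geometric_of_lt_one (norm_nonneg q) hq]

lemma QP_norm_le (hq : ‖q‖ < 1) (N : ℕ) :
    ‖QP q N‖ ≤ Real.exp (‖q‖ * (1 - ‖q‖)⁻¹) := by
  calc ‖QP q N‖ ≤ ∏ i ∈ range N, ‖1 - q ^ (i + 1)‖ := norm_prod_le _ _
  _ ≤ ∏ i ∈ range N, Real.exp (‖q‖ ^ (i + 1)) := by
      apply Finset.prod_le_prod (fun i _ => norm_nonneg _)
      intro i _
      calc ‖1 - q ^ (i+1)‖ ≤ ‖(1:ℂ)‖ + ‖q ^ (i+1)‖ := norm_sub_le _ _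
      _ = 1 + ‖q‖ ^ (i+1) := by rw [norm_one, norm_pow]
      _ ≤ Real.exp (‖q‖ ^ (i+1)) := by
          have := Real.add_one_le_exp (‖q‖ ^ (i+1)); linarith
  _ = Real.exp (∑ i ∈ range N, ‖q‖ ^ (i + 1)) := (Real.exp_sum _ _).symm
  _ ≤ Real.exp (‖q‖ * (1 - ‖q‖)⁻¹) := Real.exp_le_exp.mpr (sum_pow_le hq N)

lemma exp_aux {c t : ℝ} (ht0 : 0 ≤ t) (htc : t ≤ c) (hc : c < 1) :
    Real.exp (-(t * (1 - c)⁻¹)) ≤ 1 - t := by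
  have h1c : (0:ℝ) < 1 - c := by linarith
  have h1t : (0:ℝ) < 1 - t := by linarith
  have key : (1 - t)⁻¹ ≤ Real.exp (t * (1 - c)⁻¹) := by
    have h1 : (1 - t)⁻¹ = 1 + t * (1 - t)⁻¹ := by field_simp; ring
    have h2 : t * (1 - t)⁻¹ ≤ t * (1 - c)⁻¹ := by
      apply mul_le_mul_of_nonneg_left _ ht0
      exact inv_anti₀ h1c (by linarith)
    have h3 := Real.add_one_le_exp (t * (1 - c)⁻¹)
    linarith
  rw [Real.exp_neg, inv_le_comm₀ (Real.exp_pos _) h1t]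
  exact key

lemma QP_norm_ge (hq : ‖q‖ < 1) (N : ℕ) :
    Real.exp (-(‖q‖ * (1 - ‖q‖)⁻¹ * (1 - ‖q‖)⁻¹)) ≤ ‖QP q N‖ := by
  have step1 : Real.exp (-(‖q‖ * (1 - ‖q‖)⁻¹ * (1 - ‖q‖)⁻¹)) ≤
      Real.exp (-(∑ i ∈ range N, ‖q‖ ^ (i + 1) * (1 - ‖q‖)⁻¹)) := by
    apply Real.exp_le_exp.mpr
    rw [neg_le_neg_iff, ← Finset.sum_mul]
    apply mul_le_mul_of_nonneg_right (sum_pow_le hq N)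
    exact inv_nonneg.mpr (by linarith)
  refine step1.trans ?_
  rw [← Finset.sum_neg_distrib, Real.exp_sum, QP, norm_prod]
  apply Finset.prod_le_prod (fun i _ => (Real.exp_pos _).le)
  intro i _
  have hpow : ‖q‖ ^ (i + 1) ≤ ‖q‖ := by
    calc ‖q‖ ^ (i+1) ≤ ‖q‖ ^ 1 := pow_le_pow_of_le_one (norm_nonneg q) hq.le (by omega)
    _ = ‖q‖ := pow_one _
  calc Real.exp (-(‖q‖ ^ (i+1) * (1 - ‖q‖)⁻¹)) ≤ 1 - ‖q‖ ^ (i + 1) :=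
        exp_aux (pow_nonneg (norm_nonneg q) _) (hpow.trans (le_refl _)) hq
  _ = ‖(1:ℂ)‖ - ‖q ^ (i+1)‖ := by rw [norm_one, norm_pow]
  _ ≤ ‖1 - q ^ (i+1)‖ := norm_sub_norm_le _ _


/-! ### Gaussian binomial and the q-binomial theorem -/

noncomputable def gb (q : ℂ) (m j : ℕ) : ℂ := QP q m / (QP q j * QP q (m - j))

lemma gb_zero (hq : ‖q‖ < 1) (m : ℕ) : gb q m 0 = 1 := by
  rw [gb]
  simp only [Nat.sub_zero, QP, Finset.range_zero, Finset.prod_empty, one_mul]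
  exact div_self (QP_ne_zero hq m)

lemma gb_self (hq : ‖q‖ < 1) (m : ℕ) : gb q m m = 1 := by
  rw [gb]
  simp only [Nat.sub_self, QP, Finset.range_zero, Finset.prod_empty, mul_one]
  exact div_self (QP_ne_zero hq m)

lemma gb_pascal (hq : ‖q‖ < 1) (i d : ℕ) :
    gb q (i + d + 2) (i + 1) = gb q (i + d + 1) (i + 1) + q ^ (d + 1) * gb q (i + d + 1) i := by
  have e1 : i + d + 2 - (i + 1) = d + 1 := by omega
  have e2 : i + d + 1 - (i + 1) = d := by omega
  have e3 : i + d + 1 - i = d + 1 := by omega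
  rw [gb, gb, gb, e1, e2, e3]
  rw [show i + d + 2 = (i + d + 1) + 1 by omega, QP_succ,
    show (i + d + 1) + 1 = i + d + 2 by omega]
  rw [show QP q (i+1) = QP q i * (1 - q ^ (i+1)) from QP_succ q i]
  rw [show QP q (d+1) = QP q d * (1 - q ^ (d+1)) from QP_succ q d]
  have h1 : QP q (i + d + 1) ≠ 0 := QP_ne_zero hq _
  have h2 : QP q i ≠ 0 := QP_ne_zero hq _
  have h3 : QP q d ≠ 0 := QP_ne_zero hq _
  have h4 : (1 : ℂ) - q ^ (i + 1) ≠ 0 := QP_factor_ne_zero hq i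
  have h5 : (1 : ℂ) - q ^ (d + 1) ≠ 0 := QP_factor_ne_zero hq d
  have h6 : (1 : ℂ) - q ^ (i + d + 2) ≠ 0 := by
    have := QP_factor_ne_zero hq (i + d + 1)
    rwa [show i + d + 1 + 1 = i + d + 2 by omega] at this
  field_simp
  ring

/-- Coefficient in the q-binomial theorem. -/
noncomputable def qc (q : ℂ) (m j : ℕ) : ℂ := (-1) ^ (j:ℤ) * q ^ (T j) * gb q m j

lemma T_zero : T 0 = 0 := rfl

lemma qc_zero (hq : ‖q‖ < 1) (m : ℕ) : qc q m 0 = 1 := by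
  rw [qc, gb_zero hq]
  norm_num [T_zero]

lemma qc_step (hq0 : q ≠ 0) (hq : ‖q‖ < 1) {j m : ℕ} (hj : j < m) :
    qc q (m+1) (j+1) = qc q m (j+1) - q ^ m * qc q m j := by
  have hpascal : gb q (m+1) (j+1) = gb q m (j+1) + q ^ (m - j) * gb q m j := by
    have := gb_pascal hq j (m - 1 - j)
    rw [show j + (m-1-j) + 2 = m + 1 by omega, show j + (m-1-j) + 1 = m by omega,
      show (m-1-j) + 1 = m - j by omega] at this
    exact this
  rw [qc, qc, qc, hpascal]
  push_cast
  have hsign : (-1:ℂ) ^ ((j:ℤ) + 1) = -(-1:ℂ) ^ (j:ℤ) := by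
    rw [zpow_add₀ (by norm_num : (-1:ℂ) ≠ 0), zpow_one]; ring
  have hTs : T ((j:ℤ) + 1) = T (j:ℤ) + (j:ℤ) := T_succ _
  have hqm : q ^ (T ((j:ℤ)+1)) * q ^ ((m:ℕ) - j : ℕ) = q ^ (m:ℕ) * q ^ (T (j:ℤ)) := by
    rw [hTs]
    have : (q : ℂ) ^ ((m:ℕ) - j : ℕ) = q ^ (((m:ℤ) - j)) := by
      rw [← zpow_natCast]
      congr 1
      omega
    rw [this, zpow_add₀ hq0, ← zpow_natCast q m, ← zpow_add₀ hq0, ← zpow_add₀ hq0,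
      ← zpow_add₀ hq0]
    congr 1
    ring
  have key : (-1:ℂ) ^ ((j:ℤ)+1) * q ^ (T ((j:ℤ)+1)) * (q ^ ((m:ℕ) - j : ℕ) * gb q m j)
      = -(q ^ m * ((-1:ℂ) ^ (j:ℤ) * q ^ (T (j:ℤ)) * gb q m j)) := by
    calc (-1:ℂ) ^ ((j:ℤ)+1) * q ^ (T ((j:ℤ)+1)) * (q ^ ((m:ℕ) - j : ℕ) * gb q m j)
        = ((-1:ℂ) ^ ((j:ℤ)+1)) * (q ^ (T ((j:ℤ)+1)) * q ^ ((m:ℕ) - j : ℕ)) * gb q m j := by ring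
    _ = (-(-1:ℂ) ^ (j:ℤ)) * (q ^ (m:ℕ) * q ^ (T (j:ℤ))) * gb q m j := by rw [hsign, hqm]
    _ = -(q ^ m * ((-1:ℂ) ^ (j:ℤ) * q ^ (T (j:ℤ)) * gb q m j)) := by ring
  rw [mul_add, key]
  ring

lemma qc_last (hq0 : q ≠ 0) (hq : ‖q‖ < 1) (m : ℕ) :
    qc q (m+1) (m+1) = -(q ^ m * qc q m m) := by
  rw [qc, qc, gb_self hq, gb_self hq]
  have hsign : (-1:ℂ) ^ ((m:ℤ) + 1) = -(-1:ℂ) ^ (m:ℤ) := by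
    rw [zpow_add₀ (by norm_num : (-1:ℂ) ≠ 0), zpow_one]; ring
  have hTs : T ((m:ℤ) + 1) = T (m:ℤ) + (m:ℤ) := T_succ _
  push_cast
  rw [hsign, hTs, zpow_add₀ hq0, ← zpow_natCast q m]
  ring

lemma qbinom (hq0 : q ≠ 0) (hq : ‖q‖ < 1) (w : ℂ) (m : ℕ) :
    ∏ k ∈ range m, (1 - w * q ^ k) = ∑ j ∈ range (m+1), qc q m j * w ^ j := by
  induction m with
  | zero => simp [qc_zero hq]
  | succ m ih =>
    rw [Finset.prod_range_succ, ih]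
    have expand : (∑ j ∈ range (m+1), qc q m j * w ^ j) * (1 - w * q ^ m)
        = (∑ j ∈ range (m+1), qc q m j * w ^ j)
          - (∑ j ∈ range (m+1), (q ^ m * qc q m j) * w ^ (j+1)) := by
      rw [mul_sub, mul_one, Finset.sum_mul]
      congr 1
      apply Finset.sum_congr rfl
      intro j _
      ring
    rw [expand]
    rw [Finset.sum_range_succ' (fun j => qc q (m+1) j * w ^ j) (m+1)]
    rw [Finset.sum_range_succ' (fun j => qc q m j * w ^ j) m]
    rw [Finset.sum_range_succ (fun j => (q ^ m * qc q m j) * w ^ (j+1)) m]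
    rw [Finset.sum_range_succ (fun j => qc q (m+1) (j+1) * w ^ (j+1)) m]
    have hsplit : ∀ j ∈ range m,
        qc q (m+1) (j+1) * w ^ (j+1)
          = qc q m (j+1) * w ^ (j+1) - (q ^ m * qc q m j) * w ^ (j+1) := by
      intro j hj
      rw [qc_step hq0 hq (Finset.mem_range.mp hj)]
      ring
    rw [Finset.sum_congr rfl hsplit, Finset.sum_sub_distrib]
    rw [qc_zero hq, qc_zero hq, qc_last hq0 hq]
    ring


/-! ### Finite triple product -/

lemma zpow_sum_range {a : ℂ} (ha : a ≠ 0) (e : ℕ → ℤ) (N : ℕ) :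
    ∏ k ∈ range N, a ^ (e k) = a ^ (∑ k ∈ range N, e k) := by
  induction N with
  | zero => simp
  | succ n ih => rw [Finset.prod_range_succ, Finset.sum_range_succ, ih, ← zpow_add₀ ha]

lemma gauss_sum (N : ℕ) : 2 * (∑ k ∈ range N, ((k:ℤ) - N)) = -(N * (N+1)) := by
  have h2 : 2 * (∑ k ∈ range N, (k:ℤ)) = N * (N - 1) := by
    induction N with
    | zero => simp
    | succ n ih =>
      rw [Finset.sum_range_succ, mul_add]
      push_cast
      push_cast at ih
      linarith [ih]
  have h1 : ∑ k ∈ range N, ((k:ℤ) - N) = (∑ k ∈ range N, (k:ℤ)) - N * N := by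
    rw [Finset.sum_sub_distrib, Finset.sum_const, Finset.card_range, nsmul_eq_mul]
  rw [h1]
  linarith [h2]

lemma neg_one_zpow_even (a : ℤ) (N : ℕ) : (-1:ℂ) ^ (a - (N:ℤ)) = (-1:ℂ) ^ (a + (N:ℤ)) := by
  have h : a + (N:ℤ) = (a - N) + 2 * N := by ring
  rw [h, zpow_add₀ (by norm_num : (-1:ℂ) ≠ 0), zpow_mul]
  norm_num

lemma finiteTP (hq0 : q ≠ 0) (hq : ‖q‖ < 1) {x : ℂ} (hx : x ≠ 0) (N : ℕ) :
    (∏ k ∈ range N, (1 - x * q ^ k)) * (∏ k ∈ range N, (1 - (q/x) * q ^ k))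
      = ∑ j ∈ range (2*N+1), (-1:ℂ) ^ ((j:ℤ) - N) * q ^ (T ((j:ℤ) - N)) * gb q (N+N) j
          * x ^ ((j:ℤ) - N) := by
  rw [show 2*N = N + N by omega]
  have base := qbinom hq0 hq (x * q ^ (-(N:ℤ))) (N+N)
  -- rewrite the factors on the left of `base`
  have Lfact : ∀ k : ℕ, 1 - (x * q ^ (-(N:ℤ))) * q ^ k = 1 - x * q ^ ((k:ℤ) - N) := by
    intro k
    congr 1
    rw [show ((k:ℤ) - N) = -(N:ℤ) + k by ring, zpow_add₀ hq0, zpow_natCast, mul_assoc]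
  rw [Finset.prod_congr rfl (fun k _ => Lfact k)] at base
  -- split the product
  rw [Finset.prod_range_add] at base
  have hsecond : ∀ k ∈ range N, (1 - x * q ^ (((N + k : ℕ):ℤ) - N)) = 1 - x * q ^ k := by
    intro k _
    congr 1
    rw [show (((N + k : ℕ):ℤ) - N) = (k:ℤ) by push_cast; ring, zpow_natCast]
  rw [Finset.prod_congr rfl hsecond] at base
  -- transform the first (negative-exponent) product
  have neg_part : ∀ k ∈ range N, (1 : ℂ) - x * q ^ ((k:ℤ) - N)
      = (-x * q ^ ((k:ℤ) - N)) * (1 - (q/x) * q ^ ((N:ℤ) - 1 - k)) := by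
    intro k hk
    set u := q ^ ((k:ℤ) - N) with hu
    set v := q ^ ((N:ℤ) - 1 - k) with hv
    have huv : q * (u * v) = 1 := by
      rw [hu, hv, ← zpow_add₀ hq0, show ((k:ℤ) - N) + ((N:ℤ) - 1 - k) = -1 by ring,
        zpow_neg_one, mul_inv_cancel₀ hq0]
    have h2 : (-x * u) * (1 - (q/x) * v) = -(x*u) + q*(u*v) := by
      field_simp
      ring
    rw [h2, huv]
    ring
  rw [Finset.prod_congr rfl neg_part, Finset.prod_mul_distrib] at base
  -- identify the reflected product
  have hrefl : ∏ k ∈ range N, ((1:ℂ) - (q/x) * q ^ ((N:ℤ) - 1 - k))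
      = ∏ k ∈ range N, (1 - (q/x) * q ^ k) := by
    have h0 : ∀ k ∈ range N, ((1:ℂ) - (q/x) * q ^ ((N:ℤ) - 1 - k))
        = (fun j : ℕ => 1 - (q/x) * q ^ j) (N - 1 - k) := by
      intro k hk
      have hkN : k < N := Finset.mem_range.mp hk
      simp only
      congr 1
      rw [show ((N:ℤ) - 1 - k) = ((N - 1 - k : ℕ) : ℤ) by omega, zpow_natCast]
    rw [Finset.prod_congr rfl h0]
    exact Finset.prod_range_reflect (fun j : ℕ => 1 - (q/x) * q ^ j) N
  rw [hrefl] at base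
  -- compute the constant product
  have hconst : ∏ k ∈ range N, (-x * q ^ ((k:ℤ) - N))
      = (-1:ℂ)^(N:ℤ) * x^(N:ℤ) * q ^ (∑ k ∈ range N, ((k:ℤ) - N)) := by
    rw [Finset.prod_mul_distrib, Finset.prod_const, Finset.card_range, zpow_sum_range hq0]
    rw [show (-x) ^ N = (-1:ℂ)^N * x^N from neg_pow x N]
    rw [← zpow_natCast (-1:ℂ) N, ← zpow_natCast x N]
  rw [hconst] at base
  -- now base : C * P2 * P1 = Σ
  -- multiply both sides by the inverse constant
  set Ssum := ∑ j ∈ range (N+N+1), qc q (N+N) j * (x * q ^ (-(N:ℤ))) ^ j with hSs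
  set G := ∑ k ∈ range N, ((k:ℤ) - N) with hG
  set m0 := (-1:ℂ)^(N:ℤ) * x^(N:ℤ) * q ^ G with hm0
  have hmu : m0 ≠ 0 := by
    apply mul_ne_zero (mul_ne_zero _ _) (zpow_ne_zero _ hq0)
    · exact zpow_ne_zero _ (by norm_num)
    · exact zpow_ne_zero _ hx
  have base2 : (∏ k ∈ range N, (1 - x * q ^ k)) * (∏ k ∈ range N, (1 - (q/x) * q ^ k))
      = m0⁻¹ * Ssum := by
    rw [← base]
    rw [show m0 * (∏ k ∈ range N, (1 - (q/x) * q ^ k)) * (∏ k ∈ range N, (1 - x * q ^ k))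
        = m0 * ((∏ k ∈ range N, (1 - (q/x) * q ^ k)) * (∏ k ∈ range N, (1 - x * q ^ k))) by ring,
      ← mul_assoc, inv_mul_cancel₀ hmu, one_mul, mul_comm]
  rw [base2, hSs, Finset.mul_sum]
  apply Finset.sum_congr rfl
  intro j hj
  have hjN : (j:ℤ) ≤ (N:ℤ) + N := by
    have := Finset.mem_range.mp hj
    omega
  -- expand w^j
  have hw : (x * q ^ (-(N:ℤ))) ^ j = x ^ (j:ℤ) * q ^ (-(N:ℤ) * j) := by
    rw [mul_pow, ← zpow_natCast x j, ← zpow_natCast (q ^ (-(N:ℤ))) j, ← zpow_mul]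
  rw [hw, qc]
  -- sign
  have hsign : ((-1:ℂ)^(N:ℤ))⁻¹ * (-1:ℂ)^((j:ℤ)) = (-1:ℂ)^((j:ℤ) - N) := by
    rw [← zpow_neg, ← zpow_add₀ (by norm_num : (-1:ℂ) ≠ 0)]
    congr 1
    ring
  -- powers of x
  have hxp : (x^(N:ℤ))⁻¹ * x^(j:ℤ) = x ^ ((j:ℤ) - N) := by
    rw [← zpow_neg, ← zpow_add₀ hx]
    congr 1
    ring
  -- powers of q
  have hqp : (q^G)⁻¹ * (q ^ (T (j:ℤ)) * q ^ (-(N:ℤ) * j)) = q ^ (T ((j:ℤ) - N)) := by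
    rw [← zpow_neg, ← zpow_add₀ hq0, ← zpow_add₀ hq0]
    congr 1
    have h1 := T_sub (j:ℤ) (N:ℤ)
    have h2 := gauss_sum N
    rw [← hG] at h2
    have h3 : 2 * ((N:ℤ) * (N+1) / 2) = (N:ℤ)*(N+1) :=
      Int.mul_ediv_cancel' (Int.even_mul_succ_self _).two_dvd
    linarith
  calc m0⁻¹
        * ((-1:ℂ)^((j:ℤ)) * q ^ (T (j:ℤ)) * gb q (N+N) j * (x ^ (j:ℤ) * q ^ (-(N:ℤ) * j)))
      = (((-1:ℂ)^(N:ℤ))⁻¹ * (-1:ℂ)^((j:ℤ))) * ((q^G)⁻¹ * (q ^ (T (j:ℤ)) * q ^ (-(N:ℤ) * j)))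
        * gb q (N+N) j * ((x^(N:ℤ))⁻¹ * x^(j:ℤ)) := by
        rw [hm0, mul_inv, mul_inv]
        ring
  _ = (-1:ℂ) ^ ((j:ℤ) - N) * q ^ (T ((j:ℤ) - N)) * gb q (N+N) j * x ^ ((j:ℤ) - N) := by
        rw [hsign, hxp, hqp]


/-! ### The Jacobi triple product -/

lemma gb_norm_le (hq : ‖q‖ < 1) (m j : ℕ) :
    ‖gb q m j‖ ≤ Real.exp (‖q‖*(1-‖q‖)⁻¹)
      * ((Real.exp (-(‖q‖ * (1 - ‖q‖)⁻¹ * (1 - ‖q‖)⁻¹)))⁻¹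
        * (Real.exp (-(‖q‖ * (1 - ‖q‖)⁻¹ * (1 - ‖q‖)⁻¹)))⁻¹) := by
  set c2 := Real.exp (-(‖q‖ * (1 - ‖q‖)⁻¹ * (1 - ‖q‖)⁻¹)) with hc2
  have hc2pos : 0 < c2 := Real.exp_pos _
  rw [gb, norm_div, norm_mul]
  have h1 : ‖QP q m‖ ≤ Real.exp (‖q‖*(1-‖q‖)⁻¹) := QP_norm_le hq m
  have h2 : c2 ≤ ‖QP q j‖ := QP_norm_ge hq j
  have h3 : c2 ≤ ‖QP q (m - j)‖ := QP_norm_ge hq (m - j)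
  have hd : c2 * c2 ≤ ‖QP q j‖ * ‖QP q (m-j)‖ :=
    mul_le_mul h2 h3 hc2pos.le (norm_nonneg _)
  calc ‖QP q m‖ / (‖QP q j‖ * ‖QP q (m-j)‖)
      ≤ Real.exp (‖q‖*(1-‖q‖)⁻¹) / (c2 * c2) :=
        div_le_div₀ (Real.exp_nonneg _) h1 (by positivity) hd
  _ = Real.exp (‖q‖*(1-‖q‖)⁻¹) * (c2⁻¹ * c2⁻¹) := by
        rw [div_eq_mul_inv, mul_inv]

/-- The triple product coefficient family. -/
noncomputable def FF (q x : ℂ) (N : ℕ) (n : ℤ) : ℂ :=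
  if n.natAbs ≤ N then (-1)^n * q^(T n) * gb q (N+N) (((N:ℤ)+n).toNat) * x^n else 0

lemma FF_tsum_eq (hq0 : q ≠ 0) (hq : ‖q‖ < 1) {x : ℂ} (hx : x ≠ 0) (N : ℕ) :
    ∑' n : ℤ, FF q x N n
      = (∏ k ∈ range N, (1 - x * q ^ k)) * (∏ k ∈ range N, (1 - (q/x) * q ^ k)) := by
  rw [finiteTP hq0 hq hx N, show 2*N = N+N by omega]
  have hsupp : ∀ n : ℤ, n ∉ Finset.Icc (-(N:ℤ)) N → FF q x N n = 0 := by
    intro n hn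
    rw [FF, if_neg]
    intro hcon
    apply hn
    rw [Finset.mem_Icc]
    omega
  rw [tsum_eq_sum hsupp]
  apply Finset.sum_nbij' (i := fun n : ℤ => (n + N).toNat) (j := fun j : ℕ => (j:ℤ) - N)
  · intro a ha
    rw [Finset.mem_Icc] at ha
    rw [Finset.mem_range]
    omega
  · intro a ha
    rw [Finset.mem_range] at ha
    rw [Finset.mem_Icc]
    omega
  · intro a ha
    rw [Finset.mem_Icc] at ha
    omega
  · intro a ha
    rw [Finset.mem_range] at ha
    omega
  · intro n hn
    rw [Finset.mem_Icc] at hn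
    rw [FF, if_pos (by omega)]
    have e1 : ((((n + N).toNat : ℕ)):ℤ) - N = n := by omega
    rw [e1]
    have e2 : ((N:ℤ) + n).toNat = (n + N).toNat := by omega
    rw [e2]

lemma FF_tendsto (hq0 : q ≠ 0) (hq : ‖q‖ < 1) (x : ℂ) (n : ℤ) :
    Tendsto (fun N => FF q x N n) atTop (𝓝 (termS q x n * (pinf q q)⁻¹)) := by
  have hP := P_ne_zero hq
  have hgb : Tendsto (fun N => gb q (N+N) (((N:ℤ)+n).toNat)) atTop
      (𝓝 (pinf q q / (pinf q q * pinf q q))) := by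
    have t1 : Tendsto (fun N : ℕ => QP q (N+N)) atTop (𝓝 (pinf q q)) :=
      (tendsto_QP hq).comp (tendsto_atTop_atTop.mpr (fun b => ⟨b, fun a ha => by omega⟩))
    have t2 : Tendsto (fun N : ℕ => QP q (((N:ℤ)+n).toNat)) atTop (𝓝 (pinf q q)) :=
      (tendsto_QP hq).comp (tendsto_atTop_atTop.mpr
        (fun b => ⟨b + n.natAbs, fun a ha => by omega⟩))
    have t3 : Tendsto (fun N : ℕ => QP q ((N+N) - ((N:ℤ)+n).toNat)) atTop (𝓝 (pinf q q)) :=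
      (tendsto_QP hq).comp (tendsto_atTop_atTop.mpr
        (fun b => ⟨b + n.natAbs, fun a ha => by omega⟩))
    have := t1.div (t2.mul t3) (mul_ne_zero hP hP)
    exact this
  have heq : ∀ᶠ N : ℕ in atTop, ((-1:ℂ))^n * q^(T n) * x^n * gb q (N+N) (((N:ℤ)+n).toNat)
      = FF q x N n := by
    filter_upwards [eventually_ge_atTop n.natAbs] with N hN
    rw [FF, if_pos hN]
    ring
  have hlim : Tendsto (fun N => ((-1:ℂ))^n * q^(T n) * x^n * gb q (N+N) (((N:ℤ)+n).toNat))
      atTop (𝓝 (((-1:ℂ))^n * q^(T n) * x^n * (pinf q q / (pinf q q * pinf q q)))) :=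
    hgb.const_mul _
  rw [show termS q x n * (pinf q q)⁻¹
      = ((-1:ℂ))^n * q^(T n) * x^n * (pinf q q / (pinf q q * pinf q q)) by
    rw [termS]
    congr 1
    field_simp]
  exact hlim.congr' heq

theorem tripleProduct (hq0 : q ≠ 0) (hq : ‖q‖ < 1) {x : ℂ} (hx : x ≠ 0) :
    pinf q q * (pinf x q * pinf (q/x) q) = SS q x := by
  have hP := P_ne_zero hq
  set Cgb := Real.exp (‖q‖*(1-‖q‖)⁻¹)
      * ((Real.exp (-(‖q‖ * (1 - ‖q‖)⁻¹ * (1 - ‖q‖)⁻¹)))⁻¹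
        * (Real.exp (-(‖q‖ * (1 - ‖q‖)⁻¹ * (1 - ‖q‖)⁻¹)))⁻¹) with hCgb
  have hCpos : 0 ≤ Cgb := by positivity
  have hbound_sum : Summable (fun n : ℤ => Cgb * ‖termS q x n‖) :=
    (summable_norm_termS hq0 hq hx).mul_left Cgb
  have hdom : Tendsto (fun N => ∑' n : ℤ, FF q x N n) atTop
      (𝓝 (∑' n : ℤ, termS q x n * (pinf q q)⁻¹)) := by
    apply tendsto_tsum_of_dominated_convergence hbound_sum (FF_tendsto hq0 hq x)
    filter_upwards with N
    intro n
    rw [FF]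
    by_cases h : n.natAbs ≤ N
    · rw [if_pos h, show ((-1:ℂ))^n * q^(T n) * gb q (N+N) (((N:ℤ)+n).toNat) * x^n
          = (((-1:ℂ))^n * q^(T n) * x^n) * gb q (N+N) (((N:ℤ)+n).toNat) by ring,
        norm_mul]
      rw [mul_comm Cgb _]
      apply mul_le_mul_of_nonneg_left (gb_norm_le hq _ _) (norm_nonneg _)
    · rw [if_neg h, norm_zero]
      positivity
  have hprod : Tendsto (fun N => ∑' n : ℤ, FF q x N n) atTop
      (𝓝 (pinf x q * pinf (q/x) q)) := by
    have := (tendsto_prod_pinf hq x).mul (tendsto_prod_pinf hq (q/x))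
    apply this.congr
    intro N
    exact (FF_tsum_eq hq0 hq hx N).symm
  have huniq := tendsto_nhds_unique hprod hdom
  rw [tsum_mul_right] at huniq
  rw [← SS] at huniq
  rw [huniq]
  field_simp


/-! ### Pair decomposition -/

def phi0 : ℤ × ℤ → ℤ × ℤ := fun v => (v.1 + v.2, v.1 - v.2)
def phi1 : ℤ × ℤ → ℤ × ℤ := fun v => (v.1 + v.2 + 1, v.1 - v.2)

lemma phi0_inj : Function.Injective phi0 := by
  intro ⟨a,b⟩ ⟨c,d⟩ h
  simp only [phi0, Prod.ext_iff] at h ⊢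
  omega

lemma phi1_inj : Function.Injective phi1 := by
  intro ⟨a,b⟩ ⟨c,d⟩ h
  simp only [phi1, Prod.ext_iff] at h ⊢
  omega

lemma mem_range_phi0 (v : ℤ × ℤ) : v ∈ Set.range phi0 ↔ Even (v.1 + v.2) := by
  constructor
  · rintro ⟨⟨j,k⟩, rfl⟩
    exact ⟨j, by simp only [phi0]; omega⟩
  · rintro ⟨r, hr⟩
    exact ⟨(r, v.1 - r), by simp [phi0, Prod.ext_iff]; omega⟩

lemma mem_range_phi1 (v : ℤ × ℤ) : v ∈ Set.range phi1 ↔ Odd (v.1 + v.2) := by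
  constructor
  · rintro ⟨⟨j,k⟩, rfl⟩
    exact ⟨j, by simp only [phi1]; omega⟩
  · rintro ⟨r, hr⟩
    exact ⟨(r, v.1 - r - 1), by simp [phi1, Prod.ext_iff]; omega⟩

lemma compl_range_phi0 : (Set.range phi0)ᶜ = Set.range phi1 := by
  ext v
  rw [Set.mem_compl_iff, mem_range_phi0, mem_range_phi1, Int.not_even_iff_odd]

lemma pair_decomp (hq0 : q ≠ 0) (hq : ‖q‖ < 1) {a b : ℂ} (ha : a ≠ 0) (hb : b ≠ 0) :
    SS q (a*b) * SS q (a/b) = AA q a * BB q b - (a/b) * (BB q a * AA q b) := by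
  have hab : a * b ≠ 0 := mul_ne_zero ha hb
  have hadb : a / b ≠ 0 := div_ne_zero ha hb
  have s1 := summable_norm_termS hq0 hq hab
  have s2 := summable_norm_termS hq0 hq hadb
  set f : ℤ × ℤ → ℂ := fun v => termS q (a*b) v.1 * termS q (a/b) v.2 with hf
  have hfsum : Summable f := summable_mul_of_summable_norm s1 s2
  have h1 : SS q (a*b) * SS q (a/b) = ∑' v : ℤ × ℤ, f v :=
    tsum_mul_tsum_of_summable_norm s1 s2
  -- split the plane
  have hsplit : (∑' v : (Set.range phi0), f v) + (∑' v : ((Set.range phi0)ᶜ : Set (ℤ×ℤ)), f v)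
      = ∑' v : ℤ × ℤ, f v :=
    Summable.tsum_add_tsum_compl (hfsum.subtype _) (hfsum.subtype _)
  -- even part
  have heven : (∑' v : (Set.range phi0), f v) = ∑' jk : ℤ × ℤ, f (phi0 jk) := by
    rw [← (Equiv.ofInjective phi0 phi0_inj).tsum_eq (fun v : Set.range phi0 => f v)]
    exact tsum_congr (fun c => by simp [Equiv.ofInjective_apply])
  have hodd : (∑' v : ((Set.range phi0)ᶜ : Set (ℤ×ℤ)), f v) = ∑' jk : ℤ × ℤ, f (phi1 jk) := by
    rw [compl_range_phi0]
    rw [← (Equiv.ofInjective phi1 phi1_inj).tsum_eq (fun v : Set.range phi1 => f v)]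
    exact tsum_congr (fun c => by simp [Equiv.ofInjective_apply])
  -- evaluate even terms
  have heval0 : ∀ jk : ℤ × ℤ, f (phi0 jk) = termA q a jk.1 * termB q b jk.2 := by
    rintro ⟨j, k⟩
    simp only [hf, phi0, termS, termA, termB]
    have hsign : ((-1:ℂ))^(j+k) * ((-1:ℂ))^(j-k) = 1 := by
      rw [← zpow_add₀ (by norm_num : (-1:ℂ) ≠ 0), show (j+k) + (j-k) = 2 * j by ring,
        zpow_mul]
      norm_num
    have hqq : q^(T (j+k)) * q^(T (j-k)) = q^(j*j-j) * q^(k*k) := by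
      rw [← zpow_add₀ hq0, ← zpow_add₀ hq0, T_add_T]
    have hx1 : (a*b)^(j+k) * (a/b)^(j-k) = a^(2*j) * b^(2*k) := by
      rw [mul_zpow, div_zpow, div_eq_mul_inv, ← zpow_neg, mul_mul_mul_comm,
        ← zpow_add₀ ha, ← zpow_add₀ hb]
      congr 2 <;> ring
    calc ((-1:ℂ))^(j+k) * q^(T (j+k)) * (a*b)^(j+k) * (((-1:ℂ))^(j-k) * q^(T (j-k)) * (a/b)^(j-k))
        = (((-1:ℂ))^(j+k) * ((-1:ℂ))^(j-k)) * (q^(T (j+k)) * q^(T (j-k)))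
          * ((a*b)^(j+k) * (a/b)^(j-k)) := by ring
    _ = 1 * (q^(j*j-j) * q^(k*k)) * (a^(2*j) * b^(2*k)) := by rw [hsign, hqq, hx1]
    _ = q ^ (j*j - j) * a ^ (2*j) * (q ^ (k*k) * b ^ (2*k)) := by ring
  -- evaluate odd terms
  have heval1 : ∀ jk : ℤ × ℤ, f (phi1 jk)
      = (-(a * b⁻¹)) * (termB q a jk.1 * termA q b (jk.2 + 1)) := by
    rintro ⟨j, k⟩
    simp only [hf, phi1, termS, termA, termB]
    have hsign : ((-1:ℂ))^(j+k+1) * ((-1:ℂ))^(j-k) = -1 := by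
      rw [← zpow_add₀ (by norm_num : (-1:ℂ) ≠ 0), show (j+k+1) + (j-k) = 2 * j + 1 by ring,
        zpow_add₀ (by norm_num : (-1:ℂ) ≠ 0), zpow_mul]
      norm_num
    have hqq : q^(T (j+k+1)) * q^(T (j-k)) = q^(j*j) * q^((k+1)*(k+1) - (k+1)) := by
      rw [← zpow_add₀ hq0, ← zpow_add₀ hq0, T_add_T']
      congr 1
      ring
    have hx1 : (a*b)^(j+k+1) * (a/b)^(j-k) = (a^(2*j) * a) * (b^(2*(k+1)) * b⁻¹) := by
      rw [mul_zpow, div_zpow, div_eq_mul_inv, ← zpow_neg, mul_mul_mul_comm,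
        ← zpow_add₀ ha, ← zpow_add₀ hb]
      rw [show (j+k+1) + (j-k) = 2*j + 1 by ring, show (j+k+1) + -(j-k) = 2*(k+1) + -1 by ring]
      rw [zpow_add₀ ha, zpow_add₀ hb, zpow_one, zpow_neg, zpow_one]
    calc ((-1:ℂ))^(j+k+1) * q^(T (j+k+1)) * (a*b)^(j+k+1)
          * (((-1:ℂ))^(j-k) * q^(T (j-k)) * (a/b)^(j-k))
        = (((-1:ℂ))^(j+k+1) * ((-1:ℂ))^(j-k)) * (q^(T (j+k+1)) * q^(T (j-k)))
          * ((a*b)^(j+k+1) * (a/b)^(j-k)) := by ring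
    _ = (-1) * (q^(j*j) * q^((k+1)*(k+1) - (k+1))) * ((a^(2*j) * a) * (b^(2*(k+1)) * b⁻¹)) := by
          rw [hsign, hqq, hx1]
    _ = (-(a * b⁻¹)) * (q ^ (j*j) * a ^ (2*j) * (q ^ ((k+1)*(k+1) - (k+1)) * b ^ (2*(k+1)))) := by
          ring
  -- sum the even part
  have sA := summable_norm_termA hq0 hq ha
  have sB := summable_norm_termB hq0 hq hb
  have sB' := summable_norm_termB hq0 hq ha
  have sA' := summable_norm_termA hq0 hq hb
  have heven2 : ∑' jk : ℤ × ℤ, f (phi0 jk) = AA q a * BB q b := by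
    rw [tsum_congr heval0]
    exact (tsum_mul_tsum_of_summable_norm sA sB).symm
  -- sum the odd part
  have hshift : Summable (fun k : ℤ => ‖termA q b (k + 1)‖) := by
    have := (Equiv.addRight (1:ℤ)).summable_iff (f := fun k : ℤ => ‖termA q b k‖)
    rw [← this] at sA'
    exact sA'
  have hodd2 : ∑' jk : ℤ × ℤ, f (phi1 jk) = (-(a * b⁻¹)) * (BB q a * AA q b) := by
    rw [tsum_congr heval1, tsum_mul_left]
    congr 1
    have h2 : ∑' jk : ℤ × ℤ, termB q a jk.1 * termA q b (jk.2 + 1)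
        = BB q a * (∑' k : ℤ, termA q b (k + 1)) :=
      (tsum_mul_tsum_of_summable_norm sB' hshift).symm
    rw [h2]
    congr 1
    exact (Equiv.addRight (1:ℤ)).tsum_eq (fun k => termA q b k)
  rw [h1, ← hsplit, heven, hodd, heven2, hodd2, div_eq_mul_inv]
  ring


/-! ### Degenerate case and main theorem -/

lemma theta_zero {z : ℂ} (hz : z ≠ 0) : theta z 0 = 1 - z := by
  rw [theta, pinf, pinf]
  have h1 : (∏' k : ℕ, (1 - z * (0:ℂ) ^ k)) = 1 - z := by
    rw [tprod_eq_prod (s := {0}) (f := fun k : ℕ => 1 - z * (0:ℂ)^k)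
      (by intro b hb; simp [zero_pow (by simpa using hb : b ≠ 0)])]
    simp
  have h2 : (∏' k : ℕ, (1 - (0:ℂ)/z * (0:ℂ) ^ k)) = 1 := by
    simp [zero_div]
  rw [h1, h2, mul_one]

theorem theta_addition' (x y u v p : ℂ) (hx : x ≠ 0) (hy : y ≠ 0) (hu : u ≠ 0)
    (hv : v ≠ 0) (hp : ‖p‖ < 1) :
    theta (x * y) p * theta (x / y) p * theta (u * v) p * theta (u / v) p -
      theta (x * v) p * theta (x / v) p * theta (u * y) p * theta (u / y) p =
    u / y * (theta (y * v) p * theta (y / v) p * theta (x * u) p * theta (x / u) p) := by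
  by_cases hp0 : p = 0
  · subst hp0
    rw [theta_zero (mul_ne_zero hx hy), theta_zero (div_ne_zero hx hy),
      theta_zero (mul_ne_zero hu hv), theta_zero (div_ne_zero hu hv),
      theta_zero (mul_ne_zero hx hv), theta_zero (div_ne_zero hx hv),
      theta_zero (mul_ne_zero hu hy), theta_zero (div_ne_zero hu hy),
      theta_zero (mul_ne_zero hy hv), theta_zero (div_ne_zero hy hv),
      theta_zero (mul_ne_zero hx hu), theta_zero (div_ne_zero hx hu)]
    field_simp
    ring
  · set P := pinf p p with hPdef
    have hP : P ≠ 0 := P_ne_zero hp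
    have key : ∀ z : ℂ, z ≠ 0 → P * theta z p = SS p z := by
      intro z hz
      rw [theta, hPdef]
      exact tripleProduct hp0 hp hz
    have main : P^4 * (theta (x * y) p * theta (x / y) p * theta (u * v) p * theta (u / v) p -
        theta (x * v) p * theta (x / v) p * theta (u * y) p * theta (u / y) p)
        = P^4 * (u / y * (theta (y * v) p * theta (y / v) p * theta (x * u) p
          * theta (x / u) p)) := by
      have e1 : P^4 * (theta (x * y) p * theta (x / y) p * theta (u * v) p * theta (u / v) p)
          = (SS p (x*y) * SS p (x/y)) * (SS p (u*v) * SS p (u/v)) := by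
        rw [← key _ (mul_ne_zero hx hy), ← key _ (div_ne_zero hx hy),
          ← key _ (mul_ne_zero hu hv), ← key _ (div_ne_zero hu hv)]
        ring
      have e2 : P^4 * (theta (x * v) p * theta (x / v) p * theta (u * y) p * theta (u / y) p)
          = (SS p (x*v) * SS p (x/v)) * (SS p (u*y) * SS p (u/y)) := by
        rw [← key _ (mul_ne_zero hx hv), ← key _ (div_ne_zero hx hv),
          ← key _ (mul_ne_zero hu hy), ← key _ (div_ne_zero hu hy)]
        ring
      have e3 : P^4 * (theta (y * v) p * theta (y / v) p * theta (x * u) p * theta (x / u) p)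
          = (SS p (y*v) * SS p (y/v)) * (SS p (x*u) * SS p (x/u)) := by
        rw [← key _ (mul_ne_zero hy hv), ← key _ (div_ne_zero hy hv),
          ← key _ (mul_ne_zero hx hu), ← key _ (div_ne_zero hx hu)]
        ring
      rw [mul_sub, e1, e2, show P^4 * (u / y * (theta (y * v) p * theta (y / v) p
          * theta (x * u) p * theta (x / u) p)) = u / y * (P^4 * (theta (y * v) p
          * theta (y / v) p * theta (x * u) p * theta (x / u) p)) by ring, e3]
      rw [pair_decomp hp0 hp hx hy, pair_decomp hp0 hp hu hv,
        pair_decomp hp0 hp hx hv, pair_decomp hp0 hp hu hy,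
        pair_decomp hp0 hp hy hv, pair_decomp hp0 hp hx hu]
      field_simp
      ring
    have hP4 : P^4 ≠ 0 := pow_ne_zero _ hP
    exact mul_left_cancel₀ hP4 main

end ThetaAux

/-- The three-term addition formula for the modified Jacobi theta function:
`θ(xy)θ(x/y)θ(uv)θ(u/v) − θ(xv)θ(x/v)θ(uy)θ(u/y) = (u/y) θ(yv)θ(y/v)θ(xu)θ(x/u)`. -/
theorem theta_addition (x y u v p : ℂ) (hx : x ≠ 0) (hy : y ≠ 0) (hu : u ≠ 0)
    (hv : v ≠ 0) (hp : ‖p‖ < 1) :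
    theta (x * y) p * theta (x / y) p * theta (u * v) p * theta (u / v) p -
      theta (x * v) p * theta (x / v) p * theta (u * y) p * theta (u / y) p =
    u / y * (theta (y * v) p * theta (y / v) p * theta (x * u) p * theta (x / u) p) :=
  ThetaAux.theta_addition' x y u v p hx hy hu hv hp
end

section
/- The big elliptic weight, defined as the product W_{a,b;q,p}(s,t) = ∏_{j=1}^t w_{a,b;q,p}(s,j) of small elliptic weights, equals the closed form [θ(a q^{s+2t}) θ(b q^{2s}) θ(b q^{2s−1}) θ(a q^{1−s}/b) θ(a q^{−s}/b)] / [θ(a q^{s}) θ(b q^{2s+t}) θ(b q^{2s+t−1}) θ(a q^{1+t−s}/b) θ(a q^{t−s}/b)] · q^t, for all integers s and nonnegative integers t, whenever all theta functions appearing in denominators are nonzero. -/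
open Finset

/-- The small elliptic weight `w_{a,b;q,p}(s,t)`. -/
noncomputable def smallw (a b q p : ℂ) (s t : ℤ) : ℂ :=
  theta (a * q ^ (s + 2 * t)) p * theta (b * q ^ (2 * s + t - 2)) p *
      theta (a * q ^ (t - s - 1) / b) p /
    (theta (a * q ^ (s + 2 * t - 2)) p * theta (b * q ^ (2 * s + t)) p *
      theta (a * q ^ (t - s + 1) / b) p) * q

/-- Abstract telescoping lemma for the big elliptic weight. -/
lemma tel_aux (A B C : ℤ → ℂ) (q : ℂ) (t : ℕ)
    (hA : ∀ j : ℕ, j < t → A j ≠ 0) (hA0 : A 0 ≠ 0)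
    (hB : ∀ k : ℤ, -1 ≤ k → k ≤ t → B k ≠ 0)
    (hC : ∀ k : ℤ, 0 ≤ k → k ≤ t + 1 → C k ≠ 0) :
    ∏ j ∈ range t, (A ((j : ℤ) + 1) * B ((j : ℤ) - 1) * C j / (A j * B ((j : ℤ) + 1) * C ((j : ℤ) + 2)) * q)
      = A t * B 0 * B (-1) * C 1 * C 0 /
        (A 0 * B t * B ((t : ℤ) - 1) * C ((t : ℤ) + 1) * C t) * q ^ t := by
  induction t with
  | zero =>
      have b0 := hB 0 (by norm_num) (by norm_num)
      have bm1 := hB (-1) (by norm_num) (by norm_num)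
      have c0 := hC 0 (by norm_num) (by norm_num)
      have c1 := hC 1 (by norm_num) (by norm_num)
      simp only [range_zero, prod_empty, Nat.cast_zero, pow_zero, mul_one]
      norm_num
      rw [div_self (by simp [hA0, b0, bm1, c0, c1, mul_ne_zero])]
  | succ n ih =>
      have ih' := ih (fun j hj => hA j (by omega))
        (fun k h1 h2 => hB k h1 (by push_cast at h2 ⊢; omega))
        (fun k h1 h2 => hC k h1 (by push_cast at h2 ⊢; omega))
      rw [prod_range_succ, ih']
      have hAn := hA n (by omega)
      have hBn := hB n (by omega) (by push_cast; omega)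
      have hBn1 := hB ((n : ℤ) - 1) (by omega) (by push_cast; omega)
      have hBn2 := hB ((n : ℤ) + 1) (by omega) (by push_cast; omega)
      have hCn := hC n (by omega) (by push_cast; omega)
      have hCn1 := hC ((n : ℤ) + 1) (by omega) (by push_cast; omega)
      have hCn2 := hC ((n : ℤ) + 2) (by omega) (by push_cast; omega)
      push_cast
      have e1 : (n : ℤ) + 1 - 1 = (n : ℤ) := by ring
      have e2 : (n : ℤ) + 1 + 1 = (n : ℤ) + 2 := by ring
      rw [e1, e2]
      have key : (A n * B 0 * B (-1) * C 1 * C 0) * (A ((n : ℤ) + 1) * B ((n : ℤ) - 1) * C n) /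
          ((A 0 * B n * B ((n : ℤ) - 1) * C ((n : ℤ) + 1) * C n) * (A n * B ((n : ℤ) + 1) * C ((n : ℤ) + 2)))
          = A ((n : ℤ) + 1) * B 0 * B (-1) * C 1 * C 0 /
            (A 0 * B ((n : ℤ) + 1) * B n * C ((n : ℤ) + 2) * C ((n : ℤ) + 1)) := by
        rw [div_eq_div_iff (by simp_all [mul_ne_zero]) (by simp_all [mul_ne_zero])]
        ring
      calc A ↑n * B 0 * B (-1) * C 1 * C 0 / (A 0 * B ↑n * B (↑n - 1) * C (↑n + 1) * C ↑n) * q ^ n *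
            (A (↑n + 1) * B (↑n - 1) * C ↑n / (A ↑n * B (↑n + 1) * C (↑n + 2)) * q)
          = (A n * B 0 * B (-1) * C 1 * C 0) * (A ((n : ℤ) + 1) * B ((n : ℤ) - 1) * C n) /
          ((A 0 * B n * B ((n : ℤ) - 1) * C ((n : ℤ) + 1) * C n) * (A n * B ((n : ℤ) + 1) * C ((n : ℤ) + 2))) * q ^ (n + 1) := by
            ring
        _ = A ((n : ℤ) + 1) * B 0 * B (-1) * C 1 * C 0 /
            (A 0 * B ((n : ℤ) + 1) * B n * C ((n : ℤ) + 2) * C ((n : ℤ) + 1)) * q ^ (n + 1) := by rw [key]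

/-- The big elliptic weight `W_{a,b;q,p}(s,t) = ∏_{j=1}^t w_{a,b;q,p}(s,j)` equals its
closed form, whenever all theta functions appearing in denominators are nonzero. -/
theorem bigW_closed_form (a b q p : ℂ) (ha : a ≠ 0) (hb : b ≠ 0) (hq : q ≠ 0)
    (hp : ‖p‖ < 1) (s : ℤ) (t : ℕ)
    (hd1 : ∀ j : ℕ, j < t → theta (a * q ^ (s + 2 * (j : ℤ))) p ≠ 0)
    (hd2 : ∀ j : ℕ, j < t → theta (b * q ^ (2 * s + (j : ℤ) + 1)) p ≠ 0)
    (hd3 : ∀ j : ℕ, j < t → theta (a * q ^ ((j : ℤ) + 2 - s) / b) p ≠ 0)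
    (he1 : theta (a * q ^ s) p ≠ 0)
    (he2 : theta (b * q ^ (2 * s + (t : ℤ))) p ≠ 0)
    (he3 : theta (b * q ^ (2 * s + (t : ℤ) - 1)) p ≠ 0)
    (he4 : theta (a * q ^ (1 + (t : ℤ) - s) / b) p ≠ 0)
    (he5 : theta (a * q ^ ((t : ℤ) - s) / b) p ≠ 0) :
    ∏ j ∈ Finset.range t, smallw a b q p s ((j : ℤ) + 1) =
      theta (a * q ^ (s + 2 * (t : ℤ))) p * theta (b * q ^ (2 * s)) p *
          theta (b * q ^ (2 * s - 1)) p * theta (a * q ^ (1 - s) / b) p *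
          theta (a * q ^ (-s) / b) p /
        (theta (a * q ^ s) p * theta (b * q ^ (2 * s + (t : ℤ))) p *
          theta (b * q ^ (2 * s + (t : ℤ) - 1)) p *
          theta (a * q ^ (1 + (t : ℤ) - s) / b) p *
          theta (a * q ^ ((t : ℤ) - s) / b) p) * q ^ (t : ℤ) := by
  have congrA : ∀ {e1 e2 : ℤ}, e1 = e2 → theta (a * q ^ e1) p = theta (a * q ^ e2) p :=
    fun h => by rw [h]
  have congrB : ∀ {e1 e2 : ℤ}, e1 = e2 → theta (b * q ^ e1) p = theta (b * q ^ e2) p :=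
    fun h => by rw [h]
  have congrC : ∀ {e1 e2 : ℤ}, e1 = e2 → theta (a * q ^ e1 / b) p = theta (a * q ^ e2 / b) p :=
    fun h => by rw [h]
  by_cases hBm1 : theta (b * q ^ (2 * s - 1)) p = 0
  · -- B(-1) = 0 : both sides vanish; t ≥ 1
    have ht : 1 ≤ t := by
      rcases Nat.eq_zero_or_pos t with h | h
      · subst h; exact absurd ((congrB (by push_cast; ring)).trans hBm1) he3
      · exact h
    have hterm : smallw a b q p s (((0 : ℕ) : ℤ) + 1) = 0 := by
      simp only [smallw]
      rw [congrB (show 2 * s + (((0 : ℕ) : ℤ) + 1) - 2 = 2 * s - 1 by push_cast; ring), hBm1]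
      simp
    rw [Finset.prod_eq_zero (Finset.mem_range.mpr ht) hterm, hBm1]
    simp
  by_cases hC0 : theta (a * q ^ (-s) / b) p = 0
  · have ht : 1 ≤ t := by
      rcases Nat.eq_zero_or_pos t with h | h
      · subst h; exact absurd ((congrC (by push_cast; ring)).trans hC0) he5
      · exact h
    have hterm : smallw a b q p s (((0 : ℕ) : ℤ) + 1) = 0 := by
      simp only [smallw]
      rw [congrC (show (((0 : ℕ) : ℤ) + 1) - s - 1 = -s by push_cast; ring), hC0]
      simp
    rw [Finset.prod_eq_zero (Finset.mem_range.mpr ht) hterm, hC0]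
    simp
  by_cases hB0 : theta (b * q ^ (2 * s)) p = 0
  · have ht : 2 ≤ t := by
      by_contra hlt
      push_neg at hlt
      interval_cases t
      · exact absurd ((congrB (by push_cast; ring)).trans hB0) he2
      · exact absurd ((congrB (by push_cast; ring)).trans hB0) he3
    have hterm : smallw a b q p s (((1 : ℕ) : ℤ) + 1) = 0 := by
      simp only [smallw]
      rw [congrB (show 2 * s + (((1 : ℕ) : ℤ) + 1) - 2 = 2 * s by push_cast; ring), hB0]
      simp
    rw [Finset.prod_eq_zero (Finset.mem_range.mpr (by omega : 1 < t)) hterm, hB0]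
    simp
  by_cases hC1 : theta (a * q ^ (1 - s) / b) p = 0
  · have ht : 2 ≤ t := by
      by_contra hlt
      push_neg at hlt
      interval_cases t
      · exact absurd ((congrC (by push_cast; ring)).trans hC1) he4
      · exact absurd ((congrC (by push_cast; ring)).trans hC1) he5
    have hterm : smallw a b q p s (((1 : ℕ) : ℤ) + 1) = 0 := by
      simp only [smallw]
      rw [congrC (show (((1 : ℕ) : ℤ) + 1) - s - 1 = 1 - s by push_cast; ring), hC1]
      simp
    rw [Finset.prod_eq_zero (Finset.mem_range.mpr (by omega : 1 < t)) hterm, hC1]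
    simp
  -- main case: full telescoping
  have hA' : ∀ j : ℕ, j < t → (fun k : ℤ => theta (a * q ^ (s + 2 * k)) p) j ≠ 0 :=
    fun j hj => hd1 j hj
  have hA0' : (fun k : ℤ => theta (a * q ^ (s + 2 * k)) p) 0 ≠ 0 :=
    fun hz => he1 ((congrA (show s = s + 2 * 0 by ring)).trans hz)
  have hB' : ∀ k : ℤ, -1 ≤ k → k ≤ (t : ℤ) →
      (fun k : ℤ => theta (b * q ^ (2 * s + k)) p) k ≠ 0 := by
    intro k h1 h2 hz
    obtain h | h | h : k = -1 ∨ k = 0 ∨ 1 ≤ k := by omega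
    · subst h; exact hBm1 ((congrB (show 2 * s - 1 = 2 * s + (-1) by ring)).trans hz)
    · subst h; exact hB0 ((congrB (show 2 * s = 2 * s + 0 by ring)).trans hz)
    · exact hd2 (k - 1).toNat (by omega)
        ((congrB (show 2 * s + ((k - 1).toNat : ℤ) + 1 = 2 * s + k by omega)).trans hz)
  have hC' : ∀ k : ℤ, 0 ≤ k → k ≤ (t : ℤ) + 1 →
      (fun k : ℤ => theta (a * q ^ (k - s) / b) p) k ≠ 0 := by
    intro k h1 h2 hz
    obtain h | h | h : k = 0 ∨ k = 1 ∨ 2 ≤ k := by omega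
    · subst h; exact hC0 ((congrC (show -s = 0 - s by ring)).trans hz)
    · subst h; exact hC1 hz
    · exact hd3 (k - 2).toNat (by omega)
        ((congrC (show ((k - 2).toNat : ℤ) + 2 - s = k - s by omega)).trans hz)
  have key := tel_aux (fun k : ℤ => theta (a * q ^ (s + 2 * k)) p)
    (fun k : ℤ => theta (b * q ^ (2 * s + k)) p)
    (fun k : ℤ => theta (a * q ^ (k - s) / b) p) q t hA' hA0' hB' hC'
  have hprod : ∏ j ∈ Finset.range t, smallw a b q p s ((j : ℤ) + 1) =
      ∏ j ∈ range t, (theta (a * q ^ (s + 2 * ((j : ℤ) + 1))) p *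
        theta (b * q ^ (2 * s + ((j : ℤ) - 1))) p * theta (a * q ^ ((j : ℤ) - s) / b) p /
        (theta (a * q ^ (s + 2 * (j : ℤ))) p * theta (b * q ^ (2 * s + ((j : ℤ) + 1))) p *
          theta (a * q ^ ((j : ℤ) + 2 - s) / b) p) * q) := by
    refine Finset.prod_congr rfl fun j _ => ?_
    simp only [smallw]
    rw [congrB (show 2 * s + ((j : ℤ) + 1) - 2 = 2 * s + ((j : ℤ) - 1) by ring),
      congrC (show ((j : ℤ) + 1) - s - 1 = (j : ℤ) - s by ring),
      congrA (show s + 2 * ((j : ℤ) + 1) - 2 = s + 2 * (j : ℤ) by ring),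
      congrC (show ((j : ℤ) + 1) - s + 1 = (j : ℤ) + 2 - s by ring)]
  rw [hprod, key,
    congrB (show 2 * s + (0 : ℤ) = 2 * s by ring),
    congrB (show 2 * s + (-1 : ℤ) = 2 * s - 1 by ring),
    congrC (show (0 : ℤ) - s = -s by ring),
    congrA (show s + 2 * (0 : ℤ) = s by ring),
    congrB (show 2 * s + ((t : ℤ) - 1) = 2 * s + (t : ℤ) - 1 by ring),
    congrC (show ((t : ℤ) + 1) - s = 1 + (t : ℤ) - s by ring),
    zpow_natCast]
end

section
/- For q with 0 < |q| < 1 and 0 ≤ k ≤ n, and generic nonzero a, b (none of the relevant theta factors vanish), the specialization p = 0 of the elliptic binomial recursion holds: [(q^{1+k};q)_{n+1−k}(a q^{1+k};q)_{n+1−k}(b q^{1+k};q)_{n+1−k}(a q^{1−k}/b;q)_{n+1−k}] / [(q;q)_{n+1−k}(aq;q)_{n+1−k}(b q^{1+2k};q)_{n+1−k}(aq/b;q)_{n+1−k}] equals the corresponding sum of the two terms with n in place of n+1 (one with k, one with k−1 multiplied by the p = 0 big weight W_{a,b;q,0}(k, n+1−k)). -/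
open Finset

/-- The usual `q`-shifted factorial `(x; q)_m = ∏_{j=0}^{m-1} (1 - x q^j)`. -/
noncomputable def qPoch (x q : ℂ) (m : ℕ) : ℂ :=
  ∏ j ∈ Finset.range m, (1 - x * q ^ j)

/-- The `p = 0` big elliptic weight `W_{a,b;q,0}(s,t)`. -/
noncomputable def bigW0 (a b q : ℂ) (s t : ℤ) : ℂ :=
  (1 - a * q ^ (s + 2 * t)) * (1 - b * q ^ (2 * s)) * (1 - b * q ^ (2 * s - 1)) *
      (1 - a * q ^ (1 - s) / b) * (1 - a * q ^ (-s) / b) /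
    ((1 - a * q ^ s) * (1 - b * q ^ (2 * s + t)) * (1 - b * q ^ (2 * s + t - 1)) *
      (1 - a * q ^ (1 + t - s) / b) * (1 - a * q ^ (t - s) / b)) * q ^ t

/-- The `p = 0` elliptic binomial coefficient `[n choose k]_{a,b;q}`,
zero for `k < 0` or `k > n`. -/
noncomputable def qBinomEll (a b q : ℂ) (n k : ℤ) : ℂ :=
  if 0 ≤ k ∧ k ≤ n then
    qPoch (q ^ (1 + k)) q (n - k).toNat * qPoch (a * q ^ (1 + k)) q (n - k).toNat *
        qPoch (b * q ^ (1 + k)) q (n - k).toNat *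
        qPoch (a * q ^ (1 - k) / b) q (n - k).toNat /
      (qPoch q q (n - k).toNat * qPoch (a * q) q (n - k).toNat *
        qPoch (b * q ^ (1 + 2 * k)) q (n - k).toNat *
        qPoch (a * q / b) q (n - k).toNat)
  else 0

private lemma qPoch_succ (x q : ℂ) (m : ℕ) :
    qPoch x q (m + 1) = qPoch x q m * (1 - x * q ^ m) := by
  unfold qPoch
  exact Finset.prod_range_succ _ m

private lemma qPoch_succ' (x q : ℂ) (m : ℕ) :
    qPoch x q (m + 1) = (1 - x) * qPoch (x * q) q m := by
  unfold qPoch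
  rw [Finset.prod_range_succ']
  simp only [pow_zero, mul_one]
  rw [mul_comm]
  congr 1
  refine Finset.prod_congr rfl fun j _ => ?_
  ring

private lemma mulfrac1 (P1 P2 P3 P4 Q1 Q2 Q3 Q4 u1 u2 u3 u4 v1 v2 v3 v4 : ℂ)
    (hu1 : u1 ≠ 0) (hu2 : u2 ≠ 0) (hu3 : u3 ≠ 0) (hu4 : u4 ≠ 0)
    (hv1 : v1 ≠ 0) (hv2 : v2 ≠ 0) (hv3 : v3 ≠ 0) (hv4 : v4 ≠ 0)
    (hQ1 : Q1 ≠ 0) (hQ2 : Q2 ≠ 0) (hQ3 : Q3 ≠ 0) (hQ4 : Q4 ≠ 0) :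
    P1 / u1 * (P2 / u2) * (P3 / u3) * (P4 / u4) /
        (Q1 / v1 * (Q2 / v2) * (Q3 / v3) * (Q4 / v4))
      = P1 * P2 * P3 * P4 / (Q1 * Q2 * Q3 * Q4) * (v1 * v2 * v3 * v4 / (u1 * u2 * u3 * u4)) := by
  field_simp

private lemma mulfrac2 (P1 P2 P3 P4 Q1 Q2 Q3 Q4 c1 c2 c3 u1 u2 u3 u4 w1 w2 d1 d2 e1 e2 W1 W5 Y : ℂ)
    (hu1 : u1 ≠ 0) (hu2 : u2 ≠ 0) (hu3 : u3 ≠ 0) (hu4 : u4 ≠ 0)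
    (hc2 : c2 ≠ 0) (hw1 : w1 ≠ 0) (hw2 : w2 ≠ 0)
    (hd1 : d1 ≠ 0) (hd2 : d2 ≠ 0) (he1 : e1 ≠ 0) (he2 : e2 ≠ 0)
    (hQ1 : Q1 ≠ 0) (hQ2 : Q2 ≠ 0) (hQ3 : Q3 ≠ 0) (hQ4 : Q4 ≠ 0) :
    c1 * P1 / u1 * (c2 * P2 / u2) * (c3 * P3 / u3) * (P4 * w1 / w2) /
        (Q1 * Q2 * (d1 * d2 * Q3 / (e1 * e2)) * Q4)
      * (W1 * d2 * d1 * w2 * W5 / (c2 * e2 * e1 * w1 * u4) * Y)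
    = P1 * P2 * P3 * P4 / (Q1 * Q2 * Q3 * Q4) *
        (Y * c1 * c3 * W1 * W5 / (u1 * u2 * u3 * u4)) := by
  rw [show Q1 * Q2 * (d1 * d2 * Q3 / (e1 * e2)) * Q4
      = Q1 * Q2 * Q4 * (d1 * d2 * Q3) / (e1 * e2) by ring,
    div_div_eq_mul_div,
    show W1 * d2 * d1 * w2 * W5 / (c2 * e2 * e1 * w1 * u4) * Y
      = W1 * d2 * d1 * w2 * W5 * Y / (c2 * e2 * e1 * w1 * u4) by ring]
  simp only [div_mul_div_comm, div_mul_eq_mul_div, div_div, ← mul_div_assoc]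
  rw [div_eq_div_iff]
  · ring
  · repeat' apply mul_ne_zero
    all_goals assumption
  · repeat' apply mul_ne_zero
    all_goals assumption

private lemma master (a b q K Y p1 p2 p3 p4 t1 t2 t3 t4 P1 P2 P3 P4 Q1 Q2 Q3 Q4 C1 C2 C3 C4 D3 : ℂ)
    (hb : b ≠ 0) (hq : q ≠ 0) (hK : K ≠ 0)
    (hP1 : P1 = p1 * (1 - K * Y))
    (hP2 : P2 = p2 * (1 - a * (K * Y)))
    (hP3 : P3 = p3 * (1 - b * (K * Y)))
    (hP4 : P4 = p4 * (1 - a * (Y / K) / b))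
    (hQ1 : Q1 = t1 * (1 - Y))
    (hQ2 : Q2 = t2 * (1 - a * Y))
    (hQ3 : Q3 = t3 * (1 - b * (K ^ 2 * Y)))
    (hQ4 : Q4 = t4 * (1 - a * Y / b))
    (hC1 : C1 * (1 - K * Y) = (1 - K) * P1)
    (hC2 : C2 * (1 - a * (K * Y)) = (1 - a * K) * P2)
    (hC3 : C3 * (1 - b * (K * Y)) = (1 - b * K) * P3)
    (hC4 : C4 * (1 - a * (q / K) / b) = P4 * (1 - a * (q * Y / K) / b))
    (hD3 : D3 * ((1 - b * (K ^ 2 * Y / q)) * (1 - b * (K ^ 2 * Y)))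
        = (1 - b * (K ^ 2 / q)) * (1 - b * K ^ 2) * Q3)
    (nu1 : 1 - K * Y ≠ 0) (nu2 : 1 - a * (K * Y) ≠ 0) (nu3 : 1 - b * (K * Y) ≠ 0)
    (nu4 : 1 - a * (Y / K) / b ≠ 0)
    (nv1 : 1 - Y ≠ 0) (nv2 : 1 - a * Y ≠ 0) (nv3 : 1 - b * (K ^ 2 * Y) ≠ 0)
    (nv4 : 1 - a * Y / b ≠ 0)
    (nc2 : 1 - a * K ≠ 0) (nw1 : 1 - a * (q * Y / K) / b ≠ 0) (nw2 : 1 - a * (q / K) / b ≠ 0)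
    (nd1 : 1 - b * (K ^ 2 / q) ≠ 0) (nd2 : 1 - b * K ^ 2 ≠ 0) (ne1 : 1 - b * (K ^ 2 * Y / q) ≠ 0)
    (nQ1 : Q1 ≠ 0) (nQ2 : Q2 ≠ 0) (nQ3 : Q3 ≠ 0) (nQ4 : Q4 ≠ 0) :
    P1 * P2 * P3 * P4 / (Q1 * Q2 * Q3 * Q4)
      = p1 * p2 * p3 * p4 / (t1 * t2 * t3 * t4)
        + C1 * C2 * C3 * C4 / (Q1 * Q2 * D3 * Q4)
          * ((1 - a * (K * Y ^ 2)) * (1 - b * K ^ 2) * (1 - b * (K ^ 2 / q)) *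
                (1 - a * (q / K) / b) * (1 - a * K⁻¹ / b)
              / ((1 - a * K) * (1 - b * (K ^ 2 * Y)) * (1 - b * (K ^ 2 * Y / q)) *
                (1 - a * (q * Y / K) / b) * (1 - a * (Y / K) / b)) * Y) := by
  have ep1 : p1 = P1 / (1 - K * Y) := by rw [hP1, mul_div_cancel_right₀ _ nu1]
  have ep2 : p2 = P2 / (1 - a * (K * Y)) := by rw [hP2, mul_div_cancel_right₀ _ nu2]
  have ep3 : p3 = P3 / (1 - b * (K * Y)) := by rw [hP3, mul_div_cancel_right₀ _ nu3]
  have ep4 : p4 = P4 / (1 - a * (Y / K) / b) := by rw [hP4, mul_div_cancel_right₀ _ nu4]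
  have et1 : t1 = Q1 / (1 - Y) := by rw [hQ1, mul_div_cancel_right₀ _ nv1]
  have et2 : t2 = Q2 / (1 - a * Y) := by rw [hQ2, mul_div_cancel_right₀ _ nv2]
  have et3 : t3 = Q3 / (1 - b * (K ^ 2 * Y)) := by rw [hQ3, mul_div_cancel_right₀ _ nv3]
  have et4 : t4 = Q4 / (1 - a * Y / b) := by rw [hQ4, mul_div_cancel_right₀ _ nv4]
  have eC1 : C1 = (1 - K) * P1 / (1 - K * Y) := by rw [eq_div_iff nu1]; exact hC1
  have eC2 : C2 = (1 - a * K) * P2 / (1 - a * (K * Y)) := by rw [eq_div_iff nu2]; exact hC2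
  have eC3 : C3 = (1 - b * K) * P3 / (1 - b * (K * Y)) := by rw [eq_div_iff nu3]; exact hC3
  have eC4 : C4 = P4 * (1 - a * (q * Y / K) / b) / (1 - a * (q / K) / b) := by
    rw [eq_div_iff nw2]; exact hC4
  have eD3 : D3 = (1 - b * (K ^ 2 / q)) * (1 - b * K ^ 2) * Q3 /
      ((1 - b * (K ^ 2 * Y / q)) * (1 - b * (K ^ 2 * Y))) := by
    rw [eq_div_iff (mul_ne_zero ne1 nv3)]; exact hD3
  have h1 : p1 * p2 * p3 * p4 / (t1 * t2 * t3 * t4)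
      = P1 * P2 * P3 * P4 / (Q1 * Q2 * Q3 * Q4) *
          ((1 - Y) * (1 - a * Y) * (1 - b * (K ^ 2 * Y)) * (1 - a * Y / b) /
            ((1 - K * Y) * (1 - a * (K * Y)) * (1 - b * (K * Y)) * (1 - a * (Y / K) / b))) := by
    rw [ep1, ep2, ep3, ep4, et1, et2, et3, et4]
    exact mulfrac1 _ _ _ _ _ _ _ _ _ _ _ _ _ _ _ _
      nu1 nu2 nu3 nu4 nv1 nv2 nv3 nv4 nQ1 nQ2 nQ3 nQ4
  have h2 : C1 * C2 * C3 * C4 / (Q1 * Q2 * D3 * Q4)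
        * ((1 - a * (K * Y ^ 2)) * (1 - b * K ^ 2) * (1 - b * (K ^ 2 / q)) *
            (1 - a * (q / K) / b) * (1 - a * K⁻¹ / b)
          / ((1 - a * K) * (1 - b * (K ^ 2 * Y)) * (1 - b * (K ^ 2 * Y / q)) *
            (1 - a * (q * Y / K) / b) * (1 - a * (Y / K) / b)) * Y)
      = P1 * P2 * P3 * P4 / (Q1 * Q2 * Q3 * Q4) *
          (Y * (1 - K) * (1 - b * K) * (1 - a * (K * Y ^ 2)) * (1 - a * K⁻¹ / b) /
            ((1 - K * Y) * (1 - a * (K * Y)) * (1 - b * (K * Y)) * (1 - a * (Y / K) / b))) := by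
    rw [eC1, eC2, eC3, eC4, eD3]
    exact mulfrac2 _ _ _ _ _ _ _ _ _ _ _ _ _ _ _ _ _ _ _ _ _ _ _ _
      nu1 nu2 nu3 nu4 nc2 nw1 nw2 nd1 nd2 ne1 nv3 nQ1 nQ2 nQ3 nQ4
  rw [h1, h2, ← mul_add, ← add_div]
  rw [show (1 - Y) * (1 - a * Y) * (1 - b * (K ^ 2 * Y)) * (1 - a * Y / b)
        + Y * (1 - K) * (1 - b * K) * (1 - a * (K * Y ^ 2)) * (1 - a * K⁻¹ / b)
      = (1 - K * Y) * (1 - a * (K * Y)) * (1 - b * (K * Y)) * (1 - a * (Y / K) / b) from by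
    field_simp; ring]
  rw [div_self (mul_ne_zero (mul_ne_zero (mul_ne_zero nu1 nu2) nu3) nu4), mul_one]

/-- The `p = 0` specialization of the elliptic binomial recursion:
`[n+1,k]_{a,b;q} = [n,k]_{a,b;q} + [n,k−1]_{a,b;q} ⋅ W_{a,b;q,0}(k, n+1−k)`. -/
theorem qBinomEll_recursion (a b q : ℂ) (ha : a ≠ 0) (hb : b ≠ 0)
    (hq0 : 0 < ‖q‖) (hq1 : ‖q‖ < 1)
    (hgen : ∀ m : ℤ, a * q ^ m ≠ 1 ∧ b * q ^ m ≠ 1 ∧ a * q ^ m / b ≠ 1)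
    (n k : ℕ) (hk : k ≤ n) :
    qPoch (q ^ (1 + (k : ℤ))) q (n + 1 - k) *
        qPoch (a * q ^ (1 + (k : ℤ))) q (n + 1 - k) *
        qPoch (b * q ^ (1 + (k : ℤ))) q (n + 1 - k) *
        qPoch (a * q ^ (1 - (k : ℤ)) / b) q (n + 1 - k) /
      (qPoch q q (n + 1 - k) * qPoch (a * q) q (n + 1 - k) *
        qPoch (b * q ^ (1 + 2 * (k : ℤ))) q (n + 1 - k) *
        qPoch (a * q / b) q (n + 1 - k)) =
      qBinomEll a b q n k +
        qBinomEll a b q n ((k : ℤ) - 1) * bigW0 a b q k ((n : ℤ) + 1 - k) := by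
  have hq : q ≠ 0 := norm_pos_iff.mp hq0
  -- generic nonvanishing facts
  have nzQ : ∀ e : ℕ, e ≠ 0 → (1 : ℂ) - q ^ e ≠ 0 := by
    intro e he hcon
    have h1 : (q : ℂ) ^ e = 1 := by linear_combination -hcon
    have h2 : ‖(q : ℂ) ^ e‖ < 1 := by
      rw [norm_pow]; exact pow_lt_one₀ (norm_nonneg q) hq1 he
    rw [h1, norm_one] at h2
    exact lt_irrefl 1 h2
  have nzA : ∀ (z : ℂ) (e : ℤ), q ^ e = z → (1 : ℂ) - a * z ≠ 0 := by
    intro z e hz hcon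
    have h := (hgen e).1
    rw [hz] at h
    exact h (by linear_combination -hcon)
  have nzB : ∀ (z : ℂ) (e : ℤ), q ^ e = z → (1 : ℂ) - b * z ≠ 0 := by
    intro z e hz hcon
    have h := (hgen e).2.1
    rw [hz] at h
    exact h (by linear_combination -hcon)
  have nzAB : ∀ (z : ℂ) (e : ℤ), q ^ e = z → (1 : ℂ) - a * z / b ≠ 0 := by
    intro z e hz hcon
    have h := (hgen e).2.2
    rw [hz] at h
    exact h (by linear_combination -hcon)
  have pQ : ∀ M : ℕ, qPoch q q M ≠ 0 := by
    intro M
    unfold qPoch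
    refine Finset.prod_ne_zero_iff.mpr fun j _ => ?_
    have h := nzQ (j + 1) j.succ_ne_zero
    rwa [show (q : ℂ) ^ (j + 1) = q * q ^ j from by ring] at h
  have pA : ∀ (z : ℂ) (e : ℤ) (M : ℕ), q ^ e = z → qPoch (a * z) q M ≠ 0 := by
    intro z e M hz
    unfold qPoch
    refine Finset.prod_ne_zero_iff.mpr fun j _ => ?_
    intro hcon
    have h := (hgen (e + j)).1
    rw [zpow_add₀ hq, hz, zpow_natCast] at h
    exact h (by linear_combination -hcon)
  have pB : ∀ (z : ℂ) (e : ℤ) (M : ℕ), q ^ e = z → qPoch (b * z) q M ≠ 0 := by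
    intro z e M hz
    unfold qPoch
    refine Finset.prod_ne_zero_iff.mpr fun j _ => ?_
    intro hcon
    have h := (hgen (e + j)).2.1
    rw [zpow_add₀ hq, hz, zpow_natCast] at h
    exact h (by linear_combination -hcon)
  have pAB : ∀ (z : ℂ) (e : ℤ) (M : ℕ), q ^ e = z → qPoch (a * z / b) q M ≠ 0 := by
    intro z e M hz
    unfold qPoch
    refine Finset.prod_ne_zero_iff.mpr fun j _ => ?_
    intro hcon
    have h := (hgen (e + j)).2.2
    rw [zpow_add₀ hq, hz, zpow_natCast] at h
    exact h (by linear_combination -hcon)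
  rcases Nat.eq_zero_or_pos k with rfl | hk1
  · -- k = 0 case
    have c1 : (0 : ℤ) ≤ ((0 : ℕ) : ℤ) ∧ ((0 : ℕ) : ℤ) ≤ (n : ℤ) := by omega
    have c2 : ¬((0 : ℤ) ≤ ((0 : ℕ) : ℤ) - 1 ∧ ((0 : ℕ) : ℤ) - 1 ≤ (n : ℤ)) := by omega
    unfold qBinomEll
    rw [if_pos c1, if_neg c2, zero_mul, add_zero]
    have t0 : (((n : ℕ) : ℤ) - ((0 : ℕ) : ℤ)).toNat = n := by omega
    rw [t0]
    simp only [Nat.cast_zero, add_zero, sub_zero, mul_zero, zpow_one, Nat.sub_zero]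
    rw [div_self, div_self]
    · exact mul_ne_zero (mul_ne_zero (mul_ne_zero (pQ n) (pA q 1 n (zpow_one q)))
        (pB q 1 n (zpow_one q))) (pAB q 1 n (zpow_one q))
    · exact mul_ne_zero (mul_ne_zero (mul_ne_zero (pQ (n+1)) (pA q 1 (n+1) (zpow_one q)))
        (pB q 1 (n+1) (zpow_one q))) (pAB q 1 (n+1) (zpow_one q))
  · -- main case k ≥ 1
    obtain ⟨m, rfl⟩ : ∃ m, n = k + m := ⟨n - k, by omega⟩
    have hKne : (q : ℂ) ^ k ≠ 0 := pow_ne_zero _ hq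
    -- zpow → nat pow conversions
    have hz1 : q ^ ((1 : ℤ) + (k : ℤ)) = q ^ k * q := by
      rw [show (1 : ℤ) + (k : ℤ) = ((k + 1 : ℕ) : ℤ) by push_cast; ring, zpow_natCast, pow_succ]
    have hz2 : q ^ ((1 : ℤ) - (k : ℤ)) = q / q ^ k := by
      rw [zpow_sub₀ hq, zpow_one, zpow_natCast]
    have hz3 : q ^ ((1 : ℤ) + 2 * (k : ℤ)) = (q ^ k) ^ 2 * q := by
      rw [show (1 : ℤ) + 2 * (k : ℤ) = ((2 * k + 1 : ℕ) : ℤ) by push_cast; ring,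
        zpow_natCast, pow_succ, pow_mul']
    have hz4 : q ^ ((k : ℕ) : ℤ) = q ^ k := zpow_natCast q k
    have hz5 : q ^ ((2 : ℤ) - (k : ℤ)) = q ^ 2 / q ^ k := by
      rw [zpow_sub₀ hq, zpow_natCast, show ((2 : ℤ)) = ((2 : ℕ) : ℤ) by norm_cast, zpow_natCast]
    have hz6 : q ^ (2 * (k : ℤ) - 1) = (q ^ k) ^ 2 / q := by
      rw [show 2 * (k : ℤ) - 1 = ((2 * k : ℕ) : ℤ) - ((1 : ℕ) : ℤ) by push_cast; ring,
        zpow_sub₀ hq, zpow_natCast, zpow_natCast, pow_mul', pow_one]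
    have hz7 : q ^ ((k : ℤ) + 2 * ((m : ℤ) + 1)) = q ^ k * (q ^ (m + 1)) ^ 2 := by
      rw [show (k : ℤ) + 2 * ((m : ℤ) + 1) = ((k + 2 * (m + 1) : ℕ) : ℤ) by push_cast; ring,
        zpow_natCast, pow_add, pow_mul']
    have hz8 : q ^ (2 * (k : ℤ)) = (q ^ k) ^ 2 := by
      rw [show 2 * (k : ℤ) = ((2 * k : ℕ) : ℤ) by push_cast; ring, zpow_natCast, pow_mul']
    have hz9 : q ^ (-(k : ℤ)) = (q ^ k)⁻¹ := by rw [zpow_neg, zpow_natCast]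
    have hz10 : q ^ (2 * (k : ℤ) + ((m : ℤ) + 1)) = (q ^ k) ^ 2 * q ^ (m + 1) := by
      rw [show 2 * (k : ℤ) + ((m : ℤ) + 1) = ((2 * k + (m + 1) : ℕ) : ℤ) by push_cast; ring,
        zpow_natCast, pow_add, pow_mul']
    have hz11 : q ^ (2 * (k : ℤ) + ((m : ℤ) + 1) - 1) = (q ^ k) ^ 2 * q ^ (m + 1) / q := by
      rw [show 2 * (k : ℤ) + ((m : ℤ) + 1) - 1 = ((2 * k + (m + 1) : ℕ) : ℤ) - ((1 : ℕ) : ℤ)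
          by push_cast; ring,
        zpow_sub₀ hq, zpow_natCast, zpow_natCast, pow_add, pow_mul', pow_one]
    have hz12 : q ^ (1 + ((m : ℤ) + 1) - (k : ℤ)) = q * q ^ (m + 1) / q ^ k := by
      rw [show 1 + ((m : ℤ) + 1) - (k : ℤ) = ((m + 2 : ℕ) : ℤ) - ((k : ℕ) : ℤ) by push_cast; ring,
        zpow_sub₀ hq, zpow_natCast, zpow_natCast, show (q ^ (m + 2) : ℂ) = q * q ^ (m + 1) by ring]
    have hz13 : q ^ ((m : ℤ) + 1 - (k : ℤ)) = q ^ (m + 1) / q ^ k := by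
      rw [show (m : ℤ) + 1 - (k : ℤ) = ((m + 1 : ℕ) : ℤ) - ((k : ℕ) : ℤ) by push_cast; ring,
        zpow_sub₀ hq, zpow_natCast, zpow_natCast]
    have hz14 : q ^ ((m : ℤ) + 1) = q ^ (m + 1) := by
      rw [show (m : ℤ) + 1 = ((m + 1 : ℕ) : ℤ) by push_cast; ring, zpow_natCast]
    -- nonvanishing instances
    have nu1 : (1 : ℂ) - q ^ k * q ^ (m + 1) ≠ 0 := by
      rw [← pow_add]; exact nzQ (k + (m + 1)) (by omega)
    have nu2 : (1 : ℂ) - a * (q ^ k * q ^ (m + 1)) ≠ 0 :=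
      nzA _ ((k + (m + 1) : ℕ) : ℤ) (by rw [zpow_natCast, pow_add])
    have nu3 : (1 : ℂ) - b * (q ^ k * q ^ (m + 1)) ≠ 0 :=
      nzB _ ((k + (m + 1) : ℕ) : ℤ) (by rw [zpow_natCast, pow_add])
    have nu4 : (1 : ℂ) - a * (q ^ (m + 1) / q ^ k) / b ≠ 0 :=
      nzAB _ ((m : ℤ) + 1 - (k : ℤ)) hz13
    have nv1 : (1 : ℂ) - q ^ (m + 1) ≠ 0 := nzQ (m + 1) (by omega)
    have nv2 : (1 : ℂ) - a * q ^ (m + 1) ≠ 0 := nzA _ ((m + 1 : ℕ) : ℤ) (zpow_natCast q (m + 1))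
    have nv3 : (1 : ℂ) - b * ((q ^ k) ^ 2 * q ^ (m + 1)) ≠ 0 :=
      nzB _ (2 * (k : ℤ) + ((m : ℤ) + 1)) hz10
    have nv4 : (1 : ℂ) - a * q ^ (m + 1) / b ≠ 0 := nzAB _ ((m + 1 : ℕ) : ℤ) (zpow_natCast q (m + 1))
    have nc2 : (1 : ℂ) - a * q ^ k ≠ 0 := nzA _ ((k : ℕ) : ℤ) hz4
    have nw1 : (1 : ℂ) - a * (q * q ^ (m + 1) / q ^ k) / b ≠ 0 :=
      nzAB _ (1 + ((m : ℤ) + 1) - (k : ℤ)) hz12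
    have nw2 : (1 : ℂ) - a * (q / q ^ k) / b ≠ 0 := nzAB _ ((1 : ℤ) - (k : ℤ)) hz2
    have nd1 : (1 : ℂ) - b * ((q ^ k) ^ 2 / q) ≠ 0 := nzB _ (2 * (k : ℤ) - 1) hz6
    have nd2 : (1 : ℂ) - b * (q ^ k) ^ 2 ≠ 0 := nzB _ (2 * (k : ℤ)) hz8
    have ne1 : (1 : ℂ) - b * ((q ^ k) ^ 2 * q ^ (m + 1) / q) ≠ 0 :=
      nzB _ (2 * (k : ℤ) + ((m : ℤ) + 1) - 1) hz11
    have nQ1 : qPoch q q (m + 1) ≠ 0 := pQ (m + 1)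
    have nQ2 : qPoch (a * q) q (m + 1) ≠ 0 := pA q 1 (m + 1) (zpow_one q)
    have nQ3 : qPoch (b * ((q ^ k) ^ 2 * q)) q (m + 1) ≠ 0 :=
      pB ((q ^ k) ^ 2 * q) ((1 : ℤ) + 2 * (k : ℤ)) (m + 1) (by rw [hz3])
    have nQ4 : qPoch (a * q / b) q (m + 1) ≠ 0 := pAB q 1 (m + 1) (zpow_one q)
    -- qPoch relations
    have hP1 : qPoch (q ^ k * q) q (m + 1)
        = qPoch (q ^ k * q) q m * (1 - q ^ k * q ^ (m + 1)) := by rw [qPoch_succ]; ring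
    have hP2 : qPoch (a * (q ^ k * q)) q (m + 1)
        = qPoch (a * (q ^ k * q)) q m * (1 - a * (q ^ k * q ^ (m + 1))) := by rw [qPoch_succ]; ring
    have hP3 : qPoch (b * (q ^ k * q)) q (m + 1)
        = qPoch (b * (q ^ k * q)) q m * (1 - b * (q ^ k * q ^ (m + 1))) := by rw [qPoch_succ]; ring
    have hP4 : qPoch (a * (q / q ^ k) / b) q (m + 1)
        = qPoch (a * (q / q ^ k) / b) q m * (1 - a * (q ^ (m + 1) / q ^ k) / b) := by
      rw [qPoch_succ]; ring
    have hQ1 : qPoch q q (m + 1) = qPoch q q m * (1 - q ^ (m + 1)) := by rw [qPoch_succ]; ring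
    have hQ2 : qPoch (a * q) q (m + 1) = qPoch (a * q) q m * (1 - a * q ^ (m + 1)) := by
      rw [qPoch_succ]; ring
    have hQ3 : qPoch (b * ((q ^ k) ^ 2 * q)) q (m + 1)
        = qPoch (b * ((q ^ k) ^ 2 * q)) q m * (1 - b * ((q ^ k) ^ 2 * q ^ (m + 1))) := by
      rw [qPoch_succ]; ring
    have hQ4 : qPoch (a * q / b) q (m + 1)
        = qPoch (a * q / b) q m * (1 - a * q ^ (m + 1) / b) := by rw [qPoch_succ]; ring
    have hC1 : qPoch (q ^ k) q (m + 1) * (1 - q ^ k * q ^ (m + 1))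
        = (1 - q ^ k) * qPoch (q ^ k * q) q (m + 1) := by
      rw [← qPoch_succ]; exact qPoch_succ' _ _ _
    have hC2 : qPoch (a * q ^ k) q (m + 1) * (1 - a * (q ^ k * q ^ (m + 1)))
        = (1 - a * q ^ k) * qPoch (a * (q ^ k * q)) q (m + 1) := by
      have h1 := qPoch_succ (a * q ^ k) q (m + 1)
      rw [show (a * q ^ k * q ^ (m + 1) : ℂ) = a * (q ^ k * q ^ (m + 1)) by ring] at h1
      have h2 := qPoch_succ' (a * q ^ k) q (m + 1)
      rw [show (a * q ^ k * q : ℂ) = a * (q ^ k * q) by ring] at h2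
      rw [← h1]; exact h2
    have hC3 : qPoch (b * q ^ k) q (m + 1) * (1 - b * (q ^ k * q ^ (m + 1)))
        = (1 - b * q ^ k) * qPoch (b * (q ^ k * q)) q (m + 1) := by
      have h1 := qPoch_succ (b * q ^ k) q (m + 1)
      rw [show (b * q ^ k * q ^ (m + 1) : ℂ) = b * (q ^ k * q ^ (m + 1)) by ring] at h1
      have h2 := qPoch_succ' (b * q ^ k) q (m + 1)
      rw [show (b * q ^ k * q : ℂ) = b * (q ^ k * q) by ring] at h2
      rw [← h1]; exact h2
    have hC4 : qPoch (a * (q ^ 2 / q ^ k) / b) q (m + 1) * (1 - a * (q / q ^ k) / b)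
        = qPoch (a * (q / q ^ k) / b) q (m + 1) * (1 - a * (q * q ^ (m + 1) / q ^ k) / b) := by
      have h1 := qPoch_succ (a * (q / q ^ k) / b) q (m + 1)
      rw [show (a * (q / q ^ k) / b * q ^ (m + 1) : ℂ) = a * (q * q ^ (m + 1) / q ^ k) / b
        by ring] at h1
      have h2 := qPoch_succ' (a * (q / q ^ k) / b) q (m + 1)
      rw [show (a * (q / q ^ k) / b * q : ℂ) = a * (q ^ 2 / q ^ k) / b by ring] at h2
      rw [← h1, h2]
      ring
    have hD3 : qPoch (b * ((q ^ k) ^ 2 / q)) q (m + 1) *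
          ((1 - b * ((q ^ k) ^ 2 * q ^ (m + 1) / q)) * (1 - b * ((q ^ k) ^ 2 * q ^ (m + 1))))
        = (1 - b * ((q ^ k) ^ 2 / q)) * (1 - b * (q ^ k) ^ 2) *
            qPoch (b * ((q ^ k) ^ 2 * q)) q (m + 1) := by
      have a1 := qPoch_succ (b * ((q ^ k) ^ 2 / q)) q (m + 1)
      rw [show (b * ((q ^ k) ^ 2 / q) * q ^ (m + 1) : ℂ) = b * ((q ^ k) ^ 2 * q ^ (m + 1) / q)
        by ring] at a1
      have a2 := qPoch_succ' (b * ((q ^ k) ^ 2 / q)) q (m + 1)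
      rw [show (b * ((q ^ k) ^ 2 / q) * q : ℂ) = b * (q ^ k) ^ 2 by field_simp] at a2
      have a3 := qPoch_succ (b * (q ^ k) ^ 2) q (m + 1)
      rw [show (b * (q ^ k) ^ 2 * q ^ (m + 1) : ℂ) = b * ((q ^ k) ^ 2 * q ^ (m + 1)) by ring] at a3
      have a4 := qPoch_succ' (b * (q ^ k) ^ 2) q (m + 1)
      rw [show (b * (q ^ k) ^ 2 * q : ℂ) = b * ((q ^ k) ^ 2 * q) by ring] at a4
      linear_combination (-(1 - b * ((q ^ k) ^ 2 * q ^ (m + 1)))) * a1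
        + (1 - b * ((q ^ k) ^ 2 * q ^ (m + 1))) * a2
        + (1 - b * ((q ^ k) ^ 2 / q)) * a4 - (1 - b * ((q ^ k) ^ 2 / q)) * a3
    -- rewrite the goal
    have c1 : (0 : ℤ) ≤ ((k : ℕ) : ℤ) ∧ ((k : ℕ) : ℤ) ≤ ((k + m : ℕ) : ℤ) := by omega
    have c2 : (0 : ℤ) ≤ ((k : ℕ) : ℤ) - 1 ∧ ((k : ℕ) : ℤ) - 1 ≤ ((k + m : ℕ) : ℤ) := by omega
    have t1eq : (((k + m : ℕ) : ℤ) - ((k : ℕ) : ℤ)).toNat = m := by omega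
    have t2eq : (((k + m : ℕ) : ℤ) - (((k : ℕ) : ℤ) - 1)).toNat = m + 1 := by omega
    rw [show k + m + 1 - k = m + 1 from by omega,
      show ((k + m : ℕ) : ℤ) + 1 - ((k : ℕ) : ℤ) = (m : ℤ) + 1 from by push_cast; ring]
    unfold qBinomEll bigW0
    rw [if_pos c1, if_pos c2, t1eq, t2eq,
      show (1 : ℤ) + (((k : ℕ) : ℤ) - 1) = ((k : ℕ) : ℤ) from by ring,
      show (1 : ℤ) - (((k : ℕ) : ℤ) - 1) = (2 : ℤ) - ((k : ℕ) : ℤ) from by ring,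
      show (1 : ℤ) + 2 * (((k : ℕ) : ℤ) - 1) = 2 * ((k : ℕ) : ℤ) - 1 from by ring]
    rw [hz1, hz2, hz3, hz4, hz5, hz6, hz7, hz8, hz9, hz10, hz11, hz12, hz13, hz14]
    exact master a b q (q ^ k) (q ^ (m + 1)) _ _ _ _ _ _ _ _ _ _ _ _ _ _ _ _ _ _ _ _ _
      hb hq hKne hP1 hP2 hP3 hP4 hQ1 hQ2 hQ3 hQ4 hC1 hC2 hC3 hC4 hD3
      nu1 nu2 nu3 nu4 nv1 nv2 nv3 nv4 nc2 nw1 nw2 nd1 nd2 ne1 nQ1 nQ2 nQ3 nQ4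
end

section
/- In the algebra ℂ_{q,p}[X₁,…,X_r, 𝔼] of elliptic-commuting variables, the normal ordering of a triple product is consistent: for 1 ≤ a < b < c ≤ r, the two ways of normal-ordering X_c X_b X_a yield the same coefficient, i.e., w_{a q², b q²;q,p}(1,1) · w_{a,c;q,p}(1,1) · w_{b q², c q²;q,p}(1,1) = w_{b,c;q,p}(1,1) · w_{a q², c q²;q,p}(1,1) · w_{a,b;q,p}(1,1), where by abuse of notation the subscripts a, b, c denote the parameters a_a, a_b, a_c. Equivalently, prove this identity of theta-function quotients for generic nonzero complex a, b, c, q. -/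
open Finset

/-- Consistency of normal ordering of `X_c X_b X_a`: the `s = t = 1` instance of the
elliptic star-triangle relation for generic nonzero `a, b, c, q`. -/
theorem normal_order_consistency (a b c q p : ℂ) (ha : a ≠ 0) (hb : b ≠ 0)
    (hc : c ≠ 0) (hq : q ≠ 0) (hp : ‖p‖ < 1)
    (hgen : ∀ m : ℤ, theta (a * q ^ m) p ≠ 0 ∧ theta (b * q ^ m) p ≠ 0 ∧
      theta (c * q ^ m) p ≠ 0 ∧ theta (a * q ^ m / b) p ≠ 0 ∧
      theta (a * q ^ m / c) p ≠ 0 ∧ theta (b * q ^ m / c) p ≠ 0) :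
    smallw (a * q ^ 2) (b * q ^ 2) q p 1 1 * smallw a c q p 1 1 *
        smallw (b * q ^ 2) (c * q ^ 2) q p 1 1 =
      smallw b c q p 1 1 * smallw (a * q ^ 2) (c * q ^ 2) q p 1 1 *
        smallw a b q p 1 1 := by
  have h1 := hgen 1
  have h3 := hgen 3
  have h5 := hgen 5
  have hm1 := hgen (-1)
  simp only [show (3:ℤ) = ((3:ℕ):ℤ) by norm_num, show (5:ℤ) = ((5:ℕ):ℤ) by norm_num,
    zpow_natCast, zpow_one, zpow_neg_one] at h1 h3 h5 hm1
  obtain ⟨a1, b1, c1, ab1, ac1, bc1⟩ := h1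
  obtain ⟨a3, b3, c3, ab3, ac3, bc3⟩ := h3
  obtain ⟨a5, b5, c5, ab5, ac5, bc5⟩ := h5
  obtain ⟨am, bm, cm, abm, acm, bcm⟩ := hm1
  simp only [smallw]
  norm_num
  rw [show a * q ^ 2 * q ^ 3 = a * q ^ 5 by ring,
      show b * q ^ 2 * q ^ 3 = b * q ^ 5 by ring,
      show c * q ^ 2 * q ^ 3 = c * q ^ 5 by ring,
      show a * q ^ 2 * q = a * q ^ 3 by ring,
      show b * q ^ 2 * q = b * q ^ 3 by ring,
      show c * q ^ 2 * q = c * q ^ 3 by ring,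
      show a * q ^ 2 * q⁻¹ / (b * q ^ 2) = a * q⁻¹ / b by field_simp,
      show a * q ^ 2 * q⁻¹ / (c * q ^ 2) = a * q⁻¹ / c by field_simp,
      show b * q ^ 2 * q⁻¹ / (c * q ^ 2) = b * q⁻¹ / c by field_simp,
      show a * q ^ 3 / (b * q ^ 2) = a * q / b by field_simp,
      show a * q ^ 3 / (c * q ^ 2) = a * q / c by field_simp,
      show b * q ^ 3 / (c * q ^ 2) = b * q / c by field_simp]
  have hD : (theta (a * q ^ 3) p * theta (b * q ^ 5) p * theta (a * q / b) p) *
      (theta (a * q) p * theta (c * q ^ 3) p * theta (a * q / c) p) *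
      (theta (b * q ^ 3) p * theta (c * q ^ 5) p * theta (b * q / c) p) ≠ 0 := by
    exact mul_ne_zero (mul_ne_zero (mul_ne_zero (mul_ne_zero a3 b5) ab1)
      (mul_ne_zero (mul_ne_zero a1 c3) ac1)) (mul_ne_zero (mul_ne_zero b3 c5) bc1)
  have hE : (theta (b * q) p * theta (c * q ^ 3) p * theta (b * q / c) p) *
      (theta (a * q ^ 3) p * theta (c * q ^ 5) p * theta (a * q / c) p) *
      (theta (a * q) p * theta (b * q ^ 3) p * theta (a * q / b) p) ≠ 0 := by
    exact mul_ne_zero (mul_ne_zero (mul_ne_zero (mul_ne_zero b1 c3) bc1)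
      (mul_ne_zero (mul_ne_zero a3 c5) ac1)) (mul_ne_zero (mul_ne_zero a1 b3) ab1)
  rw [show theta (a * q ^ 5) p * theta (b * q ^ 3) p * theta (a * q⁻¹ / b) p /
        (theta (a * q ^ 3) p * theta (b * q ^ 5) p * theta (a * q / b) p) * q *
        (theta (a * q ^ 3) p * theta (c * q) p * theta (a * q⁻¹ / c) p /
          (theta (a * q) p * theta (c * q ^ 3) p * theta (a * q / c) p) * q) *
        (theta (b * q ^ 5) p * theta (c * q ^ 3) p * theta (b * q⁻¹ / c) p /
          (theta (b * q ^ 3) p * theta (c * q ^ 5) p * theta (b * q / c) p) * q) =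
      theta (a * q ^ 5) p * theta (b * q ^ 3) p * theta (a * q⁻¹ / b) p *
        (theta (a * q ^ 3) p * theta (c * q) p * theta (a * q⁻¹ / c) p) *
        (theta (b * q ^ 5) p * theta (c * q ^ 3) p * theta (b * q⁻¹ / c) p) * q ^ 3 /
        ((theta (a * q ^ 3) p * theta (b * q ^ 5) p * theta (a * q / b) p) *
          (theta (a * q) p * theta (c * q ^ 3) p * theta (a * q / c) p) *
          (theta (b * q ^ 3) p * theta (c * q ^ 5) p * theta (b * q / c) p)) by ring,
    show theta (b * q ^ 3) p * theta (c * q) p * theta (b * q⁻¹ / c) p /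
        (theta (b * q) p * theta (c * q ^ 3) p * theta (b * q / c) p) * q *
        (theta (a * q ^ 5) p * theta (c * q ^ 3) p * theta (a * q⁻¹ / c) p /
          (theta (a * q ^ 3) p * theta (c * q ^ 5) p * theta (a * q / c) p) * q) *
        (theta (a * q ^ 3) p * theta (b * q) p * theta (a * q⁻¹ / b) p /
          (theta (a * q) p * theta (b * q ^ 3) p * theta (a * q / b) p) * q) =
      theta (b * q ^ 3) p * theta (c * q) p * theta (b * q⁻¹ / c) p *
        (theta (a * q ^ 5) p * theta (c * q ^ 3) p * theta (a * q⁻¹ / c) p) *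
        (theta (a * q ^ 3) p * theta (b * q) p * theta (a * q⁻¹ / b) p) * q ^ 3 /
        ((theta (b * q) p * theta (c * q ^ 3) p * theta (b * q / c) p) *
          (theta (a * q ^ 3) p * theta (c * q ^ 5) p * theta (a * q / c) p) *
          (theta (a * q) p * theta (b * q ^ 3) p * theta (a * q / b) p)) by ring,
    div_eq_div_iff hD hE]
  ring
end

section
/- In the algebra ℂ_{q,p}[X₁,…,X_r, 𝔼_{a₁,…,a_r;q,p}] with relations X_j X_i = w_{a_i,a_j;q,p}(1,1) X_i X_j for i < j and X_i f(a₁,…,a_r) = f(a₁q²,…,a_{i−1}q², a_i q, a_{i+1}q²,…,a_r q²) X_i, the following commutation relation holds for nonnegative integers k₁,…,k_r, l₁,…,l_r: X₁^{k₁}⋯X_r^{k_r} X₁^{l₁}⋯X_r^{l_r} = [∏_{1≤i<j≤r} Q_{a_i,a_j;q,p}(l_i, K_{j−1} − k_i + L_{i−1}, k_i, k_j)] · X₁^{k₁+l₁}⋯X_r^{k_r+l_r}, where K_m = k₁+⋯+k_m, L_m = l₁+⋯+l_m. -/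
open Finset

/-- The big elliptic weight `W_{a,b;q,p}(s,t) = ∏_{j=1}^t w_{a,b;q,p}(s,j)`, shifted by
`ρ`: `W^{(ρ)}_{a,b;q,p}(s,t) = W_{aq^{2ρ},bq^{2ρ};q,p}(s,t)`, here for integer `s` and
natural `t`. -/
noncomputable def bigWsh (a b q p : ℂ) (ρ s : ℤ) (t : ℕ) : ℂ :=
  ∏ j ∈ Finset.range t, smallw (a * q ^ (2 * ρ)) (b * q ^ (2 * ρ)) q p s ((j : ℤ) + 1)

/-- The big `Q`-weight `Q_{a,b;q,p}(ℓ,ρ,s,t) = ∏_{i=1}^ℓ W^{(ρ)}_{a,b;q,p}(i+s,t)`. -/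
noncomputable def bigQ (a b q p : ℂ) (ℓ : ℕ) (ρ s : ℤ) (t : ℕ) : ℂ :=
  ∏ i ∈ Finset.range ℓ, bigWsh a b q p ρ (s + (i : ℤ) + 1) t

/-- Genericity of a tuple of parameters `(a₁,…,a_r)`. -/
def GenericR {r : ℕ} (q p : ℂ) (a : Fin r → ℂ) : Prop :=
  (∀ i, a i ≠ 0) ∧ (∀ m : ℤ, 1 ≤ m → theta (q ^ m) p ≠ 0) ∧
    (∀ i, ∀ m : ℤ, theta (a i * q ^ m) p ≠ 0) ∧
    ∀ i j : Fin r, i ≠ j → ∀ m : ℤ, theta (a i * q ^ m / a j) p ≠ 0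

/-- The shift automorphism `σ_i : a_i ↦ a_i q`, `a_j ↦ a_j q²` (`j ≠ i`). -/
def shiftA {r : ℕ} (q : ℂ) (i : Fin r) (a : Fin r → ℂ) : Fin r → ℂ :=
  fun j => if j = i then a j * q else a j * q ^ 2

/-- The normally ordered monomial `X₁^{k₁} ⋯ X_r^{k_r}`. -/
def mon {r : ℕ} {A : Type*} [Monoid A] (X : Fin r → A) (k : Fin r → ℕ) : A :=
  ((List.finRange r).map (fun i => X i ^ k i)).prod

section AuxC
variable {q p : ℂ}

private lemma mul_zpow_aux (hq : q ≠ 0) (c : ℂ) (α β : ℤ) :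
    c * q ^ α * q ^ β = c * q ^ (α + β) := by
  rw [mul_assoc, ← zpow_add₀ hq]

private lemma div_zpow_aux (hq : q ≠ 0) (c d : ℂ) (α β : ℤ) :
    c * q ^ α / (d * q ^ β) = c * q ^ (α - β) / d := by
  rw [mul_comm d, ← div_div, mul_div_assoc, ← zpow_sub₀ hq]

private lemma smallw_congr {x y : ℂ} {s1 s2 t1 t2 : ℤ} (h1 : s1 = s2) (h2 : t1 = t2) :
    smallw x y q p s1 t1 = smallw x y q p s2 t2 := by rw [h1, h2]

private lemma smallw_shift (hq : q ≠ 0) (x y : ℂ) (u v s t : ℤ) :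
    smallw (x * q ^ (u + 2 * v)) (y * q ^ (2 * u + v)) q p s t
      = smallw x y q p (s + u) (t + v) := by
  simp only [smallw, mul_zpow_aux hq, div_zpow_aux hq]
  rw [show u + 2 * v + (s + 2 * t) = s + u + 2 * (t + v) by ring,
    show 2 * u + v + (2 * s + t - 2) = 2 * (s + u) + (t + v) - 2 by ring,
    show u + 2 * v + (t - s - 1) - (2 * u + v) = t + v - (s + u) - 1 by ring,
    show u + 2 * v + (s + 2 * t - 2) = s + u + 2 * (t + v) - 2 by ring,
    show 2 * u + v + (2 * s + t) = 2 * (s + u) + (t + v) by ring,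
    show u + 2 * v + (t - s + 1) - (2 * u + v) = t + v - (s + u) + 1 by ring]

private lemma bigQ_def' (x y : ℂ) (ℓ : ℕ) (ρ s : ℤ) (t : ℕ) :
    bigQ x y q p ℓ ρ s t = ∏ i ∈ range ℓ, ∏ j ∈ range t,
      smallw (x * q ^ (2 * ρ)) (y * q ^ (2 * ρ)) q p (s + (i : ℤ) + 1) ((j : ℤ) + 1) := rfl

private lemma bigQ_congr {x y : ℂ} {ℓ : ℕ} {ρ1 ρ2 s1 s2 : ℤ} {t : ℕ}
    (h1 : ρ1 = ρ2) (h2 : s1 = s2) :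
    bigQ x y q p ℓ ρ1 s1 t = bigQ x y q p ℓ ρ2 s2 t := by rw [h1, h2]

private lemma bigQ_shift_s (hq : q ≠ 0) (x y : ℂ) (ℓ : ℕ) (ρ s : ℤ) (t n : ℕ) :
    bigQ (x * q ^ n) (y * q ^ (2 * n)) q p ℓ ρ s t = bigQ x y q p ℓ ρ (s + (n : ℤ)) t := by
  rw [bigQ_def', bigQ_def']
  refine prod_congr rfl fun i _ => prod_congr rfl fun j _ => ?_
  have hx : x * q ^ n * q ^ (2 * ρ) = x * q ^ (2 * ρ) * q ^ ((n : ℤ) + 2 * 0) := by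
    rw [← zpow_natCast q n, mul_zpow_aux hq, mul_zpow_aux hq,
      show (n : ℤ) + 2 * ρ = 2 * ρ + ((n : ℤ) + 2 * 0) by ring]
  have hy : y * q ^ (2 * n) * q ^ (2 * ρ) = y * q ^ (2 * ρ) * q ^ (2 * (n : ℤ) + 0) := by
    rw [← zpow_natCast q (2 * n), mul_zpow_aux hq, mul_zpow_aux hq]
    push_cast
    rw [show 2 * (n : ℤ) + 2 * ρ = 2 * ρ + (2 * (n : ℤ) + 0) by ring]
  rw [hx, hy, smallw_shift hq]
  exact smallw_congr (by ring) (by ring)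

private lemma bigQ_shift_rho (hq : q ≠ 0) (x y : ℂ) (ℓ : ℕ) (ρ s : ℤ) (t n : ℕ) :
    bigQ (x * q ^ (2 * n)) (y * q ^ (2 * n)) q p ℓ ρ s t
      = bigQ x y q p ℓ (ρ + (n : ℤ)) s t := by
  rw [bigQ_def', bigQ_def']
  have hx : ∀ c : ℂ, c * q ^ (2 * n) * q ^ (2 * ρ) = c * q ^ (2 * (ρ + (n : ℤ))) := by
    intro c
    rw [← zpow_natCast q (2 * n), mul_zpow_aux hq]
    push_cast
    ring_nf
  refine prod_congr rfl fun i _ => prod_congr rfl fun j _ => ?_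
  rw [hx, hx]

private lemma bigQ_zero_rho (x y : ℂ) (ℓ : ℕ) (t : ℕ) :
    bigQ x y q p ℓ 0 0 t = ∏ i ∈ range ℓ, ∏ j ∈ range t,
      smallw x y q p ((i : ℤ) + 1) ((j : ℤ) + 1) := by
  rw [bigQ_def']
  simp

end AuxC

section StructC
variable {r : ℕ}

/-- Auxiliary accumulated weight. -/
noncomputable def Hprod (q p : ℂ) (k : Fin r → ℕ) (i : Fin r) (li : ℕ) (si : ℤ) :
    List (Fin r) → ℤ → (Fin r → ℂ) → ℂ
  | [], _ => fun _ => 1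
  | m :: ms, c => fun a =>
      bigQ (a i) (a m) q p li c si (k m) * Hprod q p k i li si ms (c + (k m : ℤ)) a

/-- Auxiliary total weight. -/
noncomputable def Pfun (q p : ℂ) (k l : Fin r → ℕ) : List (Fin r) → ℤ → (Fin r → ℂ) → ℂ
  | [], _ => fun _ => 1
  | i :: tl, c => fun a =>
      Hprod q p k i (l i) (k i) tl c a * Pfun q p k l tl (c + (k i : ℤ) + (l i : ℤ)) a

variable {q p : ℂ}

private lemma shiftA_iter_apply (m : Fin r) (n : ℕ) (a : Fin r → ℂ) (j : Fin r) :
    (shiftA q m)^[n] a j = a j * (if j = m then q else q ^ 2) ^ n := by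
  induction n with
  | zero => simp
  | succ n ih =>
    rw [Function.iterate_succ_apply']
    show (if j = m then (shiftA q m)^[n] a j * q else (shiftA q m)^[n] a j * q ^ 2) = _
    rw [ih]
    by_cases h : j = m <;> simp [h, pow_succ] <;> ring

private lemma shiftA_iter_self (m : Fin r) (n : ℕ) (a : Fin r → ℂ) :
    (shiftA q m)^[n] a m = a m * q ^ n := by simp [shiftA_iter_apply]

private lemma shiftA_iter_ne (m j : Fin r) (h : j ≠ m) (n : ℕ) (a : Fin r → ℂ) :
    (shiftA q m)^[n] a j = a j * q ^ (2 * n) := by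
  rw [shiftA_iter_apply, if_neg h, ← pow_mul]

private lemma Hprod_shift_rho (hq : q ≠ 0) (k : Fin r → ℕ) (i m : Fin r) (him : i ≠ m)
    (li : ℕ) (si : ℤ) :
    ∀ (ms : List (Fin r)), m ∉ ms → ∀ (c : ℤ) (n : ℕ) (a : Fin r → ℂ),
      Hprod q p k i li si ms c ((shiftA q m)^[n] a) = Hprod q p k i li si ms (c + (n : ℤ)) a
  | [], _, c, n, a => rfl
  | m' :: ms, hmem, c, n, a => by
    have hm' : m' ≠ m := fun h => hmem (h ▸ List.mem_cons_self (a := m') (l := ms))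
    have hms : m ∉ ms := fun h => hmem (List.mem_cons_of_mem _ h)
    show bigQ _ _ q p li c si (k m') * _ = _
    rw [shiftA_iter_ne m i him n a, shiftA_iter_ne m m' hm' n a,
      bigQ_shift_rho hq, Hprod_shift_rho hq k i m him li si ms hms (c + (k m' : ℤ)) n a]
    show bigQ _ _ q p li (c + (n:ℤ)) si (k m') * Hprod q p k i li si ms (c + (k m':ℤ) + (n:ℤ)) a
      = bigQ _ _ q p li (c + (n:ℤ)) si (k m') * Hprod q p k i li si ms (c + (n:ℤ) + (k m':ℤ)) a
    rw [show c + (k m' : ℤ) + (n : ℤ) = c + (n : ℤ) + (k m' : ℤ) by ring]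

private lemma Hprod_shift_s (hq : q ≠ 0) (k : Fin r → ℕ) (i : Fin r) (li : ℕ) (si : ℤ) :
    ∀ (ms : List (Fin r)), i ∉ ms → ∀ (c : ℤ) (n : ℕ) (a : Fin r → ℂ),
      Hprod q p k i li si ms c ((shiftA q i)^[n] a) = Hprod q p k i li (si + (n : ℤ)) ms c a
  | [], _, c, n, a => rfl
  | m' :: ms, hmem, c, n, a => by
    have hm' : m' ≠ i := fun h => hmem (h ▸ List.mem_cons_self (a := m') (l := ms))
    have hms : i ∉ ms := fun h => hmem (List.mem_cons_of_mem _ h)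
    show bigQ _ _ q p li c si (k m') * _ = _
    rw [shiftA_iter_self i n a, shiftA_iter_ne i m' hm' n a, bigQ_shift_s hq,
      Hprod_shift_s hq k i li si ms hms (c + (k m' : ℤ)) n a]
    rfl

private lemma Pfun_shift (hq : q ≠ 0) (k l : Fin r → ℕ) (i : Fin r) :
    ∀ (tl : List (Fin r)), i ∉ tl → ∀ (c : ℤ) (n : ℕ) (a : Fin r → ℂ),
      Pfun q p k l tl c ((shiftA q i)^[n] a) = Pfun q p k l tl (c + (n : ℤ)) a
  | [], _, c, n, a => rfl
  | i' :: tl, hmem, c, n, a => by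
    have hi' : i ≠ i' := fun h => hmem (h ▸ List.mem_cons_self (a := i') (l := tl))
    have htl : i ∉ tl := fun h => hmem (List.mem_cons_of_mem _ h)
    show Hprod q p k i' (l i') (k i') tl c ((shiftA q i)^[n] a) * _ = _
    rw [Hprod_shift_rho hq k i' i (fun h => hi' h.symm) (l i') (k i') tl htl c n a,
      Pfun_shift hq k l i tl htl (c + (k i' : ℤ) + (l i' : ℤ)) n a]
    show _ * Pfun q p k l tl (c + (k i':ℤ) + (l i':ℤ) + (n:ℤ)) a
      = _ * Pfun q p k l tl (c + (n:ℤ) + (k i':ℤ) + (l i':ℤ)) a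
    rw [show c + (k i' : ℤ) + (l i' : ℤ) + (n : ℤ)
        = c + (n : ℤ) + (k i' : ℤ) + (l i' : ℤ) by ring]

private lemma Hprod_eq (k : Fin r → ℕ) (i : Fin r) (li : ℕ) (si : ℤ) :
    ∀ ms : List (Fin r), List.Pairwise (· < ·) ms → ∀ (c : ℤ) (a : Fin r → ℂ),
      Hprod q p k i li si ms c a
        = ∏ j ∈ ms.toFinset,
            bigQ (a i) (a j) q p li (c + ∑ ν ∈ ms.toFinset.filter (· < j), (k ν : ℤ))
              si (k j)
  | [], _, c, a => by simp [Hprod]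
  | m :: ms, hp, c, a => by
    obtain ⟨hmlt, hp'⟩ := List.pairwise_cons.mp hp
    have hmnot : m ∉ ms.toFinset := by
      simp only [List.mem_toFinset]
      intro h; exact absurd (hmlt m h) (lt_irrefl m)
    show bigQ (a i) (a m) q p li c si (k m) * Hprod q p k i li si ms (c + (k m:ℤ)) a = _
    rw [List.toFinset_cons, Finset.prod_insert hmnot,
      Hprod_eq k i li si ms hp' (c + (k m:ℤ)) a]
    refine congrArg₂ (· * ·) ?_ ?_
    · have hemp : (insert m ms.toFinset).filter (· < m) = ∅ := by
        ext x
        simp only [mem_filter, mem_insert, notMem_empty, iff_false, List.mem_toFinset, not_and]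
        rintro (hx | hx)
        · simp [hx]
        · exact not_lt.mpr (le_of_lt (hmlt x hx))
      exact bigQ_congr (by rw [hemp]; simp) rfl
    · refine Finset.prod_congr rfl fun j hj => ?_
      have hjms : j ∈ ms := List.mem_toFinset.mp hj
      have hmj : m < j := hmlt j hjms
      have hins : (insert m ms.toFinset).filter (· < j)
          = insert m (ms.toFinset.filter (· < j)) := by
        rw [Finset.filter_insert, if_pos hmj]
      rw [hins, Finset.sum_insert (fun h => hmnot (Finset.mem_filter.mp h).1)]
      exact bigQ_congr (by ring) rfl

set_option maxHeartbeats 1000000 in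
private lemma Pfun_eq (k l : Fin r → ℕ) :
    ∀ ns : List (Fin r), List.Pairwise (· < ·) ns → ∀ (c : ℤ) (a : Fin r → ℂ),
      Pfun q p k l ns c a
        = ∏ i ∈ ns.toFinset, ∏ j ∈ ns.toFinset.filter (fun j => i < j),
            bigQ (a i) (a j) q p (l i)
              ((∑ ν ∈ ns.toFinset.filter (· < j), (k ν : ℤ)) - (k i : ℤ)
                + (∑ ν ∈ ns.toFinset.filter (· < i), (l ν : ℤ)) + c) (k i) (k j)
  | [], _, c, a => by simp [Pfun]
  | i :: tl, hp, c, a => by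
    obtain ⟨hilt, hp'⟩ := List.pairwise_cons.mp hp
    have hinot : i ∉ tl.toFinset := by
      simp only [List.mem_toFinset]
      intro h; exact absurd (hilt i h) (lt_irrefl i)
    show Hprod q p k i (l i) ((k i : ℤ)) tl c a
        * Pfun q p k l tl (c + (k i : ℤ) + (l i : ℤ)) a = _
    rw [Hprod_eq k i (l i) _ tl hp' c a, Pfun_eq k l tl hp' _ a,
      List.toFinset_cons, Finset.prod_insert hinot]
    refine congrArg₂ (· * ·) ?_ ?_
    · have hfe : (insert i tl.toFinset).filter (fun j => i < j) = tl.toFinset := by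
        ext x
        simp only [mem_filter, mem_insert]
        constructor
        · rintro ⟨hx | hx, hlt⟩
          · exact absurd hlt (by simp [hx])
          · exact hx
        · intro hx
          exact ⟨Or.inr hx, hilt x (List.mem_toFinset.mp hx)⟩
      rw [hfe]
      refine Finset.prod_congr rfl fun j hj => ?_
      have hij : i < j := hilt j (List.mem_toFinset.mp hj)
      have h1 : (insert i tl.toFinset).filter (· < j)
          = insert i (tl.toFinset.filter (· < j)) := by
        rw [Finset.filter_insert, if_pos hij]
      have h2 : (insert i tl.toFinset).filter (· < i) = ∅ := by
        ext x
        simp only [mem_filter, mem_insert, notMem_empty, iff_false, List.mem_toFinset, not_and]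
        rintro (hx | hx)
        · simp [hx]
        · exact not_lt.mpr (le_of_lt (hilt x hx))
      rw [h1, h2, Finset.sum_insert (fun h => hinot (Finset.mem_filter.mp h).1),
        Finset.sum_empty]
      exact bigQ_congr (by ring) rfl
    · refine Finset.prod_congr rfl fun i' hi' => ?_
      have hii' : i < i' := hilt i' (List.mem_toFinset.mp hi')
      have hfe : (insert i tl.toFinset).filter (fun j => i' < j)
          = tl.toFinset.filter (fun j => i' < j) := by
        rw [Finset.filter_insert, if_neg (fun h => absurd (h.trans hii') (lt_irrefl _))]
      rw [hfe]
      refine Finset.prod_congr rfl fun j hj => ?_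
      have hi'j : i' < j := (Finset.mem_filter.mp hj).2
      have hij : i < j := hii'.trans hi'j
      have h1 : (insert i tl.toFinset).filter (· < j)
          = insert i (tl.toFinset.filter (· < j)) := by
        rw [Finset.filter_insert, if_pos hij]
      have h2 : (insert i tl.toFinset).filter (· < i')
          = insert i (tl.toFinset.filter (· < i')) := by
        rw [Finset.filter_insert, if_pos hii']
      rw [h1, h2, Finset.sum_insert (fun h => hinot (Finset.mem_filter.mp h).1),
        Finset.sum_insert (fun h => hinot (Finset.mem_filter.mp h).1)]
      exact bigQ_congr (by push_cast; ring) rfl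

end StructC

section AlgC

variable {r : ℕ} {A : Type*} [Ring A]

/-- Monomial along a list of indices. -/
def monL (X : Fin r → A) (k : Fin r → ℕ) (ns : List (Fin r)) : A :=
  (ns.map fun i => X i ^ k i).prod

lemma monL_cons (X : Fin r → A) (k : Fin r → ℕ) (i : Fin r) (ns : List (Fin r)) :
    monL X k (i :: ns) = X i ^ k i * monL X k ns := by simp [monL]

variable {q p : ℂ} {X : Fin r → A} {Φ : ((Fin r → ℂ) → ℂ) →+* A}

private lemma pow_Phi (hXf : ∀ (i : Fin r) (f : (Fin r → ℂ) → ℂ),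
      X i * Φ f = Φ (fun a => f (shiftA q i a)) * X i)
    (i : Fin r) (n : ℕ) (f : (Fin r → ℂ) → ℂ) :
    X i ^ n * Φ f = Φ (fun a => f ((shiftA q i)^[n] a)) * X i ^ n := by
  induction n with
  | zero => simp
  | succ n ih =>
    rw [pow_succ', mul_assoc, ih, ← mul_assoc, hXf i, mul_assoc, ← pow_succ']
    exact congrArg (fun z => z * X i ^ (n + 1)) (congrArg Φ (funext fun a =>
      congrArg f (Function.iterate_succ_apply (shiftA q i) n a).symm))

private lemma rowB (hq : q ≠ 0)
    (hcomm : ∀ i j : Fin r, i < j →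
      X j * X i = Φ (fun a => smallw (a i) (a j) q p 1 1) * (X i * X j))
    (hXf : ∀ (i : Fin r) (f : (Fin r → ℂ) → ℂ),
      X i * Φ f = Φ (fun a => f (shiftA q i a)) * X i)
    {i j : Fin r} (hij : i < j) (s : ℕ) :
    X j * X i ^ s
      = Φ (fun a => ∏ i' ∈ range s, smallw (a i) (a j) q p ((i' : ℤ) + 1) 1)
        * (X i ^ s * X j) := by
  induction s with
  | zero =>
    rw [show (fun a : Fin r → ℂ => ∏ i' ∈ range 0, smallw (a i) (a j) q p ((i' : ℤ) + 1) 1)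
        = (1 : (Fin r → ℂ) → ℂ) from funext fun a => by simp, map_one]
    simp
  | succ s ih =>
    have hji : j ≠ i := hij.ne'
    rw [pow_succ', ← mul_assoc, hcomm i j hij, mul_assoc, mul_assoc, ih,
      ← mul_assoc (X i), hXf i]
    simp only [mul_assoc]
    rw [← mul_assoc, ← map_mul]
    congr 1
    refine congrArg Φ (funext fun a => ?_)
    show smallw (a i) (a j) q p 1 1
        * ∏ i' ∈ range s, smallw (shiftA q i a i) (shiftA q i a j) q p ((i' : ℤ) + 1) 1
      = ∏ i' ∈ range (s + 1), smallw (a i) (a j) q p ((i' : ℤ) + 1) 1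
    have e1 : shiftA q i a i = a i * q := by simp [shiftA]
    have e2 : shiftA q i a j = a j * q ^ 2 := by simp [shiftA, hji]
    rw [e1, e2, Finset.prod_range_succ', mul_comm]
    congr 1
    · refine Finset.prod_congr rfl fun i' _ => ?_
      rw [show a i * q = a i * q ^ ((1 : ℤ) + 2 * 0) by norm_num,
        show a j * q ^ 2 = a j * q ^ ((2 : ℤ) * 1 + 0) by
          rw [show (2 : ℤ) * 1 + 0 = ((2 : ℕ) : ℤ) by norm_num, zpow_natCast],
        smallw_shift hq]
      exact smallw_congr (by push_cast; ring) (by norm_num)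

private lemma powB (hq : q ≠ 0)
    (hcomm : ∀ i j : Fin r, i < j →
      X j * X i = Φ (fun a => smallw (a i) (a j) q p 1 1) * (X i * X j))
    (hXf : ∀ (i : Fin r) (f : (Fin r → ℂ) → ℂ),
      X i * Φ f = Φ (fun a => f (shiftA q i a)) * X i)
    {i j : Fin r} (hij : i < j) (s t : ℕ) :
    X j ^ t * X i ^ s
      = Φ (fun a => ∏ i' ∈ range s, ∏ j' ∈ range t,
          smallw (a i) (a j) q p ((i' : ℤ) + 1) ((j' : ℤ) + 1))
        * (X i ^ s * X j ^ t) := by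
  induction t with
  | zero =>
    rw [show (fun a : Fin r → ℂ => ∏ i' ∈ range s, ∏ j' ∈ range 0,
        smallw (a i) (a j) q p ((i' : ℤ) + 1) ((j' : ℤ) + 1))
        = (1 : (Fin r → ℂ) → ℂ) from funext fun a => by simp, map_one]
    simp
  | succ t ih =>
    rw [pow_succ' (X j) t, mul_assoc, ih, ← mul_assoc (X j), hXf j, mul_assoc,
      ← mul_assoc (X j) (X i ^ s), rowB hq hcomm hXf hij s]
    simp only [mul_assoc]
    rw [← mul_assoc, ← map_mul]
    congr 1
    refine congrArg Φ (funext fun a => ?_)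
    show (∏ i' ∈ range s, ∏ j' ∈ range t,
          smallw (shiftA q j a i) (shiftA q j a j) q p ((i' : ℤ) + 1) ((j' : ℤ) + 1))
        * ∏ i' ∈ range s, smallw (a i) (a j) q p ((i' : ℤ) + 1) 1
      = ∏ i' ∈ range s, ∏ j' ∈ range (t + 1),
          smallw (a i) (a j) q p ((i' : ℤ) + 1) ((j' : ℤ) + 1)
    have e1 : shiftA q j a i = a i * q ^ 2 := by simp [shiftA, hij.ne]
    have e2 : shiftA q j a j = a j * q := by simp [shiftA]
    rw [e1, e2, ← Finset.prod_mul_distrib]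
    refine Finset.prod_congr rfl fun i' _ => ?_
    rw [Finset.prod_range_succ']
    congr 1
    · refine Finset.prod_congr rfl fun j' _ => ?_
      rw [show a i * q ^ 2 = a i * q ^ ((0 : ℤ) + 2 * 1) by
          rw [show (0 : ℤ) + 2 * 1 = ((2 : ℕ) : ℤ) by norm_num, zpow_natCast],
        show a j * q = a j * q ^ (2 * (0 : ℤ) + 1) by norm_num,
        smallw_shift hq]
      exact smallw_congr (by push_cast; ring) (by push_cast; ring)

private lemma Bq (hq : q ≠ 0)
    (hcomm : ∀ i j : Fin r, i < j →
      X j * X i = Φ (fun a => smallw (a i) (a j) q p 1 1) * (X i * X j))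
    (hXf : ∀ (i : Fin r) (f : (Fin r → ℂ) → ℂ),
      X i * Φ f = Φ (fun a => f (shiftA q i a)) * X i)
    {i j : Fin r} (hij : i < j) (s t : ℕ) :
    X j ^ t * X i ^ s
      = Φ (fun a => bigQ (a i) (a j) q p s 0 0 t) * (X i ^ s * X j ^ t) := by
  rw [powB hq hcomm hXf hij s t]
  congr 2
  exact funext fun a => (bigQ_zero_rho (a i) (a j) s t).symm

set_option maxHeartbeats 1000000 in
private lemma Dlemma (hq : q ≠ 0)
    (hcomm : ∀ i j : Fin r, i < j →
      X j * X i = Φ (fun a => smallw (a i) (a j) q p 1 1) * (X i * X j))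
    (hXf : ∀ (i : Fin r) (f : (Fin r → ℂ) → ℂ),
      X i * Φ f = Φ (fun a => f (shiftA q i a)) * X i)
    (k : Fin r → ℕ) (i : Fin r) (s : ℕ) :
    ∀ ms : List (Fin r), List.Pairwise (· < ·) ms → (∀ m ∈ ms, i < m) →
      monL X k ms * X i ^ s
        = Φ (Hprod q p k i s 0 ms 0) * (X i ^ s * monL X k ms)
  | [], _, _ => by
    rw [show Hprod q p k i s 0 ([] : List (Fin r)) 0 = 1 from rfl, map_one]
    simp [monL]
  | m :: ms, hp, hgt => by
    obtain ⟨hmlt, hp'⟩ := List.pairwise_cons.mp hp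
    have him : i < m := hgt m (List.mem_cons_self (a := m) (l := ms))
    have hgt' : ∀ m' ∈ ms, i < m' := fun m' h => hgt m' (List.mem_cons_of_mem _ h)
    have hmms : m ∉ ms := fun h => absurd (hmlt m h) (lt_irrefl m)
    rw [monL_cons, mul_assoc, Dlemma hq hcomm hXf k i s ms hp' hgt',
      ← mul_assoc, pow_Phi hXf m (k m)]
    have hH : (fun a => Hprod q p k i s 0 ms 0 ((shiftA q m)^[k m] a))
        = Hprod q p k i s 0 ms (0 + (k m : ℤ)) :=
      funext fun a => Hprod_shift_rho hq k i m him.ne s 0 ms hmms 0 (k m) a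
    rw [hH, mul_assoc, ← mul_assoc (X m ^ k m), Bq hq hcomm hXf him s (k m)]
    simp only [mul_assoc]
    rw [← monL_cons X k m ms, ← mul_assoc, ← map_mul]
    congr 1
    refine congrArg Φ (funext fun a => ?_)
    show Hprod q p k i s 0 ms (0 + (k m : ℤ)) a * bigQ (a i) (a m) q p s 0 0 (k m)
      = bigQ (a i) (a m) q p s 0 0 (k m) * Hprod q p k i s 0 ms (0 + (k m : ℤ)) a
    exact mul_comm _ _

set_option maxHeartbeats 1000000 in
private lemma mainL (hq : q ≠ 0)
    (hcomm : ∀ i j : Fin r, i < j →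
      X j * X i = Φ (fun a => smallw (a i) (a j) q p 1 1) * (X i * X j))
    (hXf : ∀ (i : Fin r) (f : (Fin r → ℂ) → ℂ),
      X i * Φ f = Φ (fun a => f (shiftA q i a)) * X i)
    (k l : Fin r → ℕ) :
    ∀ ns : List (Fin r), List.Pairwise (· < ·) ns →
      monL X k ns * monL X l ns = Φ (Pfun q p k l ns 0) * monL X (k + l) ns
  | [], _ => by
    rw [show Pfun q p k l ([] : List (Fin r)) 0 = 1 from rfl, map_one]
    simp [monL]
  | i :: tl, hp => by
    obtain ⟨hilt, hp'⟩ := List.pairwise_cons.mp hp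
    have hitl : i ∉ tl := fun h => absurd (hilt i h) (lt_irrefl i)
    rw [monL_cons, monL_cons, mul_assoc, ← mul_assoc (monL X k tl),
      Dlemma hq hcomm hXf k i (l i) tl hp' hilt]
    simp only [mul_assoc]
    rw [mainL hq hcomm hXf k l tl hp', ← mul_assoc (X i ^ k i), pow_Phi hXf i (k i)]
    have hH : (fun a => Hprod q p k i (l i) 0 tl 0 ((shiftA q i)^[k i] a))
        = Hprod q p k i (l i) (0 + (k i : ℤ)) tl 0 :=
      funext fun a => Hprod_shift_s hq k i (l i) 0 tl hitl 0 (k i) a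
    rw [hH, mul_assoc, ← mul_assoc (X i ^ k i) (X i ^ l i), ← pow_add,
      ← mul_assoc (X i ^ (k i + l i)) (Φ (Pfun q p k l tl 0)),
      pow_Phi hXf i (k i + l i)]
    have hP : (fun a => Pfun q p k l tl 0 ((shiftA q i)^[k i + l i] a))
        = Pfun q p k l tl (0 + ((k i + l i : ℕ) : ℤ)) :=
      funext fun a => Pfun_shift hq k l i tl hitl 0 (k i + l i) a
    rw [hP]
    rw [monL_cons X (k + l) i tl, show (k + l) i = k i + l i from rfl]
    simp only [← mul_assoc]
    rw [← map_mul]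
    congr 2
    refine congrArg Φ (funext fun a => ?_)
    show Hprod q p k i (l i) (0 + (k i : ℤ)) tl 0 a
        * Pfun q p k l tl (0 + ((k i + l i : ℕ) : ℤ)) a
      = Hprod q p k i (l i) ((k i : ℤ)) tl 0 a
        * Pfun q p k l tl (0 + (k i : ℤ) + (l i : ℤ)) a
    push_cast
    simp only [zero_add]

end AlgC

/-- The commutation lemma in `ℂ_{q,p}[X₁,…,X_r, 𝔼_{a₁,…,a_r;q,p}]`:
`X₁^{k₁}⋯X_r^{k_r} X₁^{l₁}⋯X_r^{l_r} = [∏_{i<j} Q_{a_i,a_j;q,p}(l_i, K_{j−1}−k_i+L_{i−1},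
k_i, k_j)] X₁^{k₁+l₁}⋯X_r^{k_r+l_r}`. -/
theorem elliptic_commutation_lemma {r : ℕ} {A : Type*} [Ring A] (q p : ℂ)
    (hq : q ≠ 0) (hp : ‖p‖ < 1) (X : Fin r → A) (Φ : ((Fin r → ℂ) → ℂ) →+* A)
    (hΦ : ∀ f g : (Fin r → ℂ) → ℂ, (∀ a, GenericR q p a → f a = g a) → Φ f = Φ g)
    (hcomm : ∀ i j : Fin r, i < j →
      X j * X i = Φ (fun a => smallw (a i) (a j) q p 1 1) * (X i * X j))
    (hXf : ∀ (i : Fin r) (f : (Fin r → ℂ) → ℂ),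
      X i * Φ f = Φ (fun a => f (shiftA q i a)) * X i)
    (k l : Fin r → ℕ) :
    mon X k * mon X l =
      Φ (fun a => ∏ i, ∏ j ∈ Finset.univ.filter (fun j => i < j),
          bigQ (a i) (a j) q p (l i)
            ((∑ ν ∈ Finset.univ.filter (· < j), (k ν : ℤ)) - (k i : ℤ) +
              ∑ ν ∈ Finset.univ.filter (· < i), (l ν : ℤ))
            (k i) (k j)) *
        mon X (k + l) := by
  have hpair := List.pairwise_lt_finRange r
  have hmain := mainL (q := q) (p := p) (X := X) (Φ := Φ) hq hcomm hXf k l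
    (List.finRange r) hpair
  have hm1 : mon X k = monL X k (List.finRange r) := rfl
  have hm2 : mon X l = monL X l (List.finRange r) := rfl
  have hm3 : mon X (k + l) = monL X (k + l) (List.finRange r) := rfl
  rw [hm1, hm2, hm3, hmain]
  congr 2
  refine funext fun a => ?_
  rw [Pfun_eq k l (List.finRange r) hpair 0 a]
  simp only [List.toFinset_finRange, add_zero]
end
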